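/- arXiv:math/0602033 — 10 statements merged into one kernel-verified Lean document; each statement's English description precedes it below -/
import Mathlib

section
/- Let T be a bounded linear operator on a Hilbert space H, h a nonzero vector, and T_t = T + t(·,h)h. A point z_0 ∈ ρ(T) is an eigenvalue of T_t if and only if 1 + t((T - z_0 I)^{-1}h, h) = 0. -/
/-- **Eigenvalues of a rank-one perturbation.**
If `T_t = T + t(·,h)h` and `z₀ ∈ ρ(T)`, then `z₀` is an eigenvalue of `T_t` if and only if
`1 + t ((T - z₀)⁻¹ h, h) = 0`. -/
theorem rank_one_perturbation_eigenvalue_iff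
    {H : Type*} [NormedAddCommGroup H] [InnerProductSpace ℂ H] [CompleteSpace H]
    (T : H →L[ℂ] H) (h : H) (hh : h ≠ 0) (t : ℂ)
    (Tt : H →L[ℂ] H)
    (hTt : ∀ x, Tt x = T x + t • ((inner ℂ h x : ℂ) • h))
    (z₀ : ℂ) (hz₀ : z₀ ∉ spectrum ℂ T) :
    (∃ v : H, v ≠ 0 ∧ Tt v = z₀ • v) ↔
      1 + t * (inner ℂ h ((Ring.inverse (T - z₀ • (1 : H →L[ℂ] H))) h) : ℂ) = 0 := by
  set A : H →L[ℂ] H := T - z₀ • (1 : H →L[ℂ] H) with hA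
  have hu : IsUnit A := by
    have h1 : IsUnit (algebraMap ℂ (H →L[ℂ] H) z₀ - T) :=
      spectrum.notMem_iff.mp hz₀
    have : A = -(algebraMap ℂ (H →L[ℂ] H) z₀ - T) := by
      simp [hA, Algebra.algebraMap_eq_smul_one]
    rw [this]
    exact h1.neg
  set B : H →L[ℂ] H := Ring.inverse A with hB
  have hBA : B * A = 1 := Ring.inverse_mul_cancel A hu
  have hAB : A * B = 1 := Ring.mul_inverse_cancel A hu
  have hBAapp : ∀ x : H, B (A x) = x := by
    intro x
    have := congrArg (fun (S : H →L[ℂ] H) => S x) hBA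
    simpa using this
  have hABapp : ∀ x : H, A (B x) = x := by
    intro x
    have := congrArg (fun (S : H →L[ℂ] H) => S x) hAB
    simpa using this
  have hAapp : ∀ x : H, A x = T x - z₀ • x := by
    intro x; simp [hA]
  constructor
  · rintro ⟨v, hv0, hv⟩
    -- A v = -(t * ⟪h,v⟫) • h
    have hAv : A v = -((t * (inner ℂ h v : ℂ)) • h) := by
      rw [hAapp]
      have := hTt v
      rw [this] at hv
      have : T v = z₀ • v - t • ((inner ℂ h v : ℂ) • h) := by
        rw [← hv]; abel
      rw [this, smul_smul]
      abel
    have hinner : (inner ℂ h v : ℂ) ≠ 0 := by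
      intro hz
      apply hv0
      have : A v = 0 := by rw [hAv, hz]; simp
      have := congrArg B this
      rw [hBAapp] at this
      simpa using this
    have hvBh : v = -((t * (inner ℂ h v : ℂ)) • B h) := by
      have := congrArg B hAv
      rw [hBAapp] at this
      simpa using this
    have hcalc : (inner ℂ h v : ℂ) = -((t * (inner ℂ h v : ℂ)) * (inner ℂ h (B h) : ℂ)) := by
      conv_lhs => rw [hvBh]
      rw [inner_neg_right, inner_smul_right]
    field_simp at hcalc
    have : (inner ℂ h v : ℂ) * (1 + t * (inner ℂ h (B h) : ℂ)) = 0 := by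
      ring_nf
      ring_nf at hcalc
      linear_combination (inner ℂ h v : ℂ) * hcalc
    rcases mul_eq_zero.mp this with h1 | h2
    · exact absurd h1 hinner
    · exact h2
  · intro hcond
    refine ⟨B h, ?_, ?_⟩
    · intro hz
      apply hh
      have := congrArg A hz
      rw [hABapp] at this
      simpa using this
    · have hABh : A (B h) = h := hABapp h
      rw [hTt]
      have hT : T (B h) = z₀ • B h + h := by
        have := hAapp (B h)
        rw [hABh] at this
        have : T (B h) - z₀ • B h = h := this.symm
        linear_combination (norm := module) this
      rw [hT, smul_smul]
      have : (1 : ℂ) • h + (t * (inner ℂ h (B h) : ℂ)) • h = 0 := by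
        rw [← add_smul, hcond, zero_smul]
      rw [one_smul] at this
      have h2 : (t * (inner ℂ h (B h) : ℂ)) • h = -h := by
        linear_combination (norm := module) this
      rw [h2]
      abel
end

section
/- Let A be a bounded linear operator on a finite-dimensional or separable Hilbert space H whose imaginary part has rank one, with 2 A_I h = (h, g) g for all h ∈ H, where A_I = (A - A*)/(2i) ≥ 0. Then A is prime (i.e., the span of {A^n A_I H : n ≥ 0} is dense in H) if and only if g is a cyclic vector for the real part A_R = (A + A*)/2. -/
private lemma closure_maps {H : Type*} [NormedAddCommGroup H] [InnerProductSpace ℂ H]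
    (f : H →L[ℂ] H) (p : Submodule ℂ H) (h : ∀ x ∈ p, f x ∈ p) :
    ∀ x ∈ p.topologicalClosure, f x ∈ p.topologicalClosure := by
  intro x hx
  have hm : Set.MapsTo f (closure (p : Set H)) (closure (p : Set H)) :=
    (Set.MapsTo.closure h f.continuous)
  exact hm hx

/-- **Proposition (prime ↔ cyclic).**
Let `A` be a bounded dissipative operator on a separable Hilbert space with rank-one
imaginary part, `2 A_I h = (h,g)g` (equivalently `(A - A*) h = i (h,g) g`).  Then `A` is
prime (the span of `{Aⁿ A_I H : n ≥ 0}` is dense) iff `g` is cyclic for `A_R = (A + A*)/2`. -/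
theorem prime_iff_cyclic_realPart
    {H : Type*} [NormedAddCommGroup H] [InnerProductSpace ℂ H] [CompleteSpace H]
    [TopologicalSpace.SeparableSpace H]
    (A : H →L[ℂ] H) (g : H)
    (hdiss : ∀ x : H, 0 ≤ (inner ℂ x (A x) : ℂ).im)
    (hAI : ∀ x : H, A x - (ContinuousLinearMap.adjoint A) x
        = Complex.I • ((inner ℂ g x : ℂ) • g)) :
    (Submodule.span ℂ {v : H | ∃ (k : ℕ) (x : H),
        v = (A ^ k) (A x - (ContinuousLinearMap.adjoint A) x)}).topologicalClosure = ⊤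
    ↔ (Submodule.span ℂ {v : H | ∃ k : ℕ,
        v = ((((2 : ℂ)⁻¹) • (A + ContinuousLinearMap.adjoint A)) ^ k) g}).topologicalClosure
          = ⊤ := by
  set B : H →L[ℂ] H := ((2 : ℂ)⁻¹) • (A + ContinuousLinearMap.adjoint A) with hB
  set S₁ : Set H := {v : H | ∃ (k : ℕ) (x : H),
      v = (A ^ k) (A x - (ContinuousLinearMap.adjoint A) x)} with hS₁
  set S₂ : Set H := {v : H | ∃ k : ℕ, v = (A ^ k) g} with hS₂
  set S₃ : Set H := {v : H | ∃ k : ℕ, v = (B ^ k) g} with hS₃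
  have hadj : ∀ x : H, (ContinuousLinearMap.adjoint A) x
      = A x - Complex.I • ((inner ℂ g x : ℂ) • g) := by
    intro x
    have := hAI x
    have : A x - (A x - (ContinuousLinearMap.adjoint A) x)
        = A x - Complex.I • ((inner ℂ g x : ℂ) • g) := by rw [this]
    simpa using this
  have hBx : ∀ x : H, B x = A x - ((2 : ℂ)⁻¹ * (Complex.I * (inner ℂ g x : ℂ))) • g := by
    intro x
    rw [hB]
    simp only [ContinuousLinearMap.smul_apply, ContinuousLinearMap.add_apply, hadj x]
    module
  have hAx : ∀ x : H, A x = B x + ((2 : ℂ)⁻¹ * (Complex.I * (inner ℂ g x : ℂ))) • g := by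
    intro x; rw [hBx x]; module
  -- span S₁ = span S₂
  have hspan12 : Submodule.span ℂ S₁ = Submodule.span ℂ S₂ := by
    apply le_antisymm
    · rw [Submodule.span_le]
      rintro v ⟨k, x, rfl⟩
      have : (A ^ k) (A x - (ContinuousLinearMap.adjoint A) x)
          = (Complex.I * (inner ℂ g x : ℂ)) • (A ^ k) g := by
        rw [hAI x, map_smul, map_smul, smul_smul]
      rw [this]
      exact Submodule.smul_mem _ _ (Submodule.subset_span ⟨k, rfl⟩)
    · rw [Submodule.span_le]
      rintro v ⟨k, rfl⟩
      by_cases hg : g = 0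
      · have : (A ^ k) g = 0 := by rw [hg, map_zero]
        rw [this]; exact Submodule.zero_mem _
      · have hne : (Complex.I * (inner ℂ g g : ℂ)) ≠ 0 := by
          apply mul_ne_zero Complex.I_ne_zero
          exact (inner_self_ne_zero (𝕜 := ℂ)).mpr hg
        have key : (A ^ k) (A g - (ContinuousLinearMap.adjoint A) g)
            = (Complex.I * (inner ℂ g g : ℂ)) • (A ^ k) g := by
          rw [hAI g, map_smul, map_smul, smul_smul]
        have : (A ^ k) g = (Complex.I * (inner ℂ g g : ℂ))⁻¹ •
            (A ^ k) (A g - (ContinuousLinearMap.adjoint A) g) := by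
          rw [key, smul_smul, inv_mul_cancel₀ hne, one_smul]
        rw [this]
        exact Submodule.smul_mem _ _ (Submodule.subset_span ⟨k, g, rfl⟩)
  -- closures of span S₂ and span S₃ agree
  have hg2 : g ∈ Submodule.span ℂ S₂ := Submodule.subset_span
    ⟨0, by rw [pow_zero]; exact (ContinuousLinearMap.one_apply g).symm⟩
  have hg3 : g ∈ Submodule.span ℂ S₃ := Submodule.subset_span
    ⟨0, by rw [pow_zero]; exact (ContinuousLinearMap.one_apply g).symm⟩
  have hA2 : ∀ v ∈ Submodule.span ℂ S₂, A v ∈ Submodule.span ℂ S₂ := by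
    intro v hv
    induction hv using Submodule.span_induction with
    | mem x hx =>
        obtain ⟨k, rfl⟩ := hx
        exact Submodule.subset_span ⟨k + 1, by rw [pow_succ']; rfl⟩
    | zero => simpa using Submodule.zero_mem _
    | add x y _ _ hx hy => rw [map_add]; exact Submodule.add_mem _ hx hy
    | smul c x _ hx => rw [map_smul]; exact Submodule.smul_mem _ _ hx
  have hB3 : ∀ v ∈ Submodule.span ℂ S₃, B v ∈ Submodule.span ℂ S₃ := by
    intro v hv
    induction hv using Submodule.span_induction with
    | mem x hx =>
        obtain ⟨k, rfl⟩ := hx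
        exact Submodule.subset_span ⟨k + 1, by rw [pow_succ']; rfl⟩
    | zero => simpa using Submodule.zero_mem _
    | add x y _ _ hx hy => rw [map_add]; exact Submodule.add_mem _ hx hy
    | smul c x _ hx => rw [map_smul]; exact Submodule.smul_mem _ _ hx
  set N := (Submodule.span ℂ S₂).topologicalClosure with hN
  set M := (Submodule.span ℂ S₃).topologicalClosure with hM
  have hgN : g ∈ N := (Submodule.span ℂ S₂).le_topologicalClosure hg2
  have hgM : g ∈ M := (Submodule.span ℂ S₃).le_topologicalClosure hg3
  have hAN : ∀ v ∈ N, A v ∈ N := closure_maps A _ hA2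
  have hBM : ∀ v ∈ M, B v ∈ M := closure_maps B _ hB3
  have hAM : ∀ v ∈ M, A v ∈ M := by
    intro v hv
    rw [hAx v]
    exact Submodule.add_mem _ (hBM v hv) (Submodule.smul_mem _ _ hgM)
  have hBN : ∀ v ∈ N, B v ∈ N := by
    intro v hv
    rw [hBx v]
    exact Submodule.sub_mem _ (hAN v hv) (Submodule.smul_mem _ _ hgN)
  have hNM : N = M := by
    apply le_antisymm
    · apply Submodule.topologicalClosure_minimal _ _ (Submodule.isClosed_topologicalClosure _)
      rw [Submodule.span_le]
      rintro v ⟨k, rfl⟩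
      induction k with
      | zero => rw [pow_zero, ContinuousLinearMap.one_apply]; exact hgM
      | succ n ih => rw [pow_succ']; exact hAM _ ih
    · apply Submodule.topologicalClosure_minimal _ _ (Submodule.isClosed_topologicalClosure _)
      rw [Submodule.span_le]
      rintro v ⟨k, rfl⟩
      induction k with
      | zero => rw [pow_zero, ContinuousLinearMap.one_apply]; exact hgN
      | succ n ih => rw [pow_succ']; exact hBN _ ih
  rw [hspan12]
  rw [show (Submodule.span ℂ S₂).topologicalClosure = M from hNM]
end

section
/- Let A be a bounded dissipative operator with rank-one imaginary part on an n-dimensional Hilbert space, with 2 A_I h = (h, g) g. Then the following are equivalent: (1) A is prime; (2) A has no real eigenvalues; (3) the vectors g, Ag, ..., A^{n-1}g are linearly independent. -/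
open ContinuousLinearMap Submodule Module

/-- Auxiliary: if the "controllability" span is not everything, then the operator has a
real eigenvalue.  Stated over an abstract finite-dimensional complex inner product space to
avoid instance blowups on `EuclideanSpace`. -/
lemma aux_real_eigenvalue {E : Type*} [NormedAddCommGroup E] [InnerProductSpace ℂ E]
    [FiniteDimensional ℂ E]
    (A : E →L[ℂ] E) (g : E)
    (hAI : ∀ x, A x - (ContinuousLinearMap.adjoint A) x
        = Complex.I • ((inner ℂ g x : ℂ) • g))
    (hS : Submodule.span ℂ {v | ∃ (k : ℕ) (x : E),
        v = (A ^ k) (A x - (ContinuousLinearMap.adjoint A) x)} ≠ ⊤) :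
    ∃ (r : ℝ) (v : E), v ≠ 0 ∧ A v = (r : ℂ) • v := by
  classical
  set S : Submodule ℂ E :=
    Submodule.span ℂ {v | ∃ (k : ℕ) (x : E),
      v = (A ^ k) (A x - (ContinuousLinearMap.adjoint A) x)} with hSdef
  have hadj : ∀ x, (ContinuousLinearMap.adjoint A) x
      = A x - Complex.I • ((inner ℂ g x : ℂ) • g) := by
    intro x
    rw [← hAI x]; abel
  have hmemS : ∀ (k : ℕ) (x : E),
      (A ^ k) (A x - (ContinuousLinearMap.adjoint A) x) ∈ S :=
    fun k x => Submodule.subset_span ⟨k, x, rfl⟩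
  have hsucc : ∀ (k : ℕ) (w : E), A ((A ^ k) w) = (A ^ (k + 1)) w := by
    intro k w
    rw [pow_succ', ContinuousLinearMap.mul_apply]
  have hSinv : ∀ u ∈ S, A u ∈ S := by
    intro u hu
    induction hu using Submodule.span_induction with
    | mem v hv =>
      obtain ⟨k, x, rfl⟩ := hv
      rw [hsucc]
      exact hmemS (k + 1) x
    | zero => simpa using S.zero_mem
    | add x y hx hy ihx ihy => simpa [map_add] using S.add_mem ihx ihy
    | smul a x hx ihx => simpa [map_smul] using S.smul_mem a ihx
  have hNne : Sᗮ ≠ ⊥ := by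
    intro h
    exact hS ((Submodule.orthogonal_eq_bot_iff).mp h)
  haveI : Nontrivial Sᗮ := Submodule.nontrivial_iff_ne_bot.mpr hNne
  have hgN : ∀ x ∈ Sᗮ, (inner ℂ g x : ℂ) = 0 := by
    intro x hx
    have h0 : (inner ℂ (A x - (ContinuousLinearMap.adjoint A) x) x : ℂ) = 0 := by
      have hmem : A x - (ContinuousLinearMap.adjoint A) x ∈ S := by
        have := hmemS 0 x
        simpa using this
      exact (Submodule.mem_orthogonal S x).mp hx _ hmem
    rw [hAI x, inner_smul_left, inner_smul_left, Complex.conj_I] at h0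
    have h1 : (starRingEnd ℂ) (inner ℂ g x : ℂ) * (inner ℂ g x : ℂ) = 0 := by
      rcases mul_eq_zero.mp h0 with h | h
      · exact absurd (neg_eq_zero.mp h) Complex.I_ne_zero
      · exact h
    rw [mul_comm, Complex.mul_conj] at h1
    have : Complex.normSq (inner ℂ g x : ℂ) = 0 := by exact_mod_cast h1
    exact Complex.normSq_eq_zero.mp this
  have hNinv : ∀ x ∈ Sᗮ, A x ∈ Sᗮ := by
    intro x hx
    rw [Submodule.mem_orthogonal]
    intro u hu
    rw [← ContinuousLinearMap.adjoint_inner_left, hadj u, inner_sub_left,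
      (Submodule.mem_orthogonal S x).mp hx _ (hSinv u hu),
      inner_smul_left, inner_smul_left, hgN x hx]
    simp
  -- restrict A to Sᗮ
  have hNinv' : ∀ x ∈ Sᗮ, (A : E →ₗ[ℂ] E) x ∈ Sᗮ := hNinv
  set B : Sᗮ →ₗ[ℂ] Sᗮ := LinearMap.restrict (A : E →ₗ[ℂ] E) hNinv' with hBdef
  have hBapp : ∀ x : Sᗮ, (B x : E) = A (x : E) := by
    intro x; rfl
  have hsym : B.IsSymmetric := by
    intro x y
    rw [Submodule.coe_inner, Submodule.coe_inner, hBapp, hBapp,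
      ← ContinuousLinearMap.adjoint_inner_right, hadj (y : E), inner_sub_right,
      inner_smul_right, inner_smul_right, hgN _ y.2]
    simp
  obtain ⟨μ, hμ⟩ := Module.End.exists_eigenvalue B
  obtain ⟨v, hv⟩ := hμ.exists_hasEigenvector
  have hre : (μ.re : ℂ) = μ :=
    Complex.conj_eq_iff_re.mp (hsym.conj_eigenvalue_eq_self hμ)
  refine ⟨μ.re, (v : E), ?_, ?_⟩
  · simpa using hv.right
  · have h1 : B v = μ • v := hv.apply_eq_smul
    have h2 : A (v : E) = μ • (v : E) := by
      rw [← hBapp, h1]; rfl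
    rw [h2, hre]

/-- **Equivalent conditions for a finite-dimensional dissipative operator with rank-one
imaginary part.**  On `H = ℂⁿ`, with `2 A_I h = (h,g)g`: `A` is prime ⟺ `A` has no real
eigenvalues ⟺ `g, Ag, …, A^{n-1}g` are linearly independent. -/
theorem finiteDim_prime_tfae (n : ℕ)
    (A : EuclideanSpace ℂ (Fin n) →L[ℂ] EuclideanSpace ℂ (Fin n))
    (g : EuclideanSpace ℂ (Fin n))
    (hdiss : ∀ x, 0 ≤ (inner ℂ x (A x) : ℂ).im)
    (hAI : ∀ x, A x - (ContinuousLinearMap.adjoint A) x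
        = Complex.I • ((inner ℂ g x : ℂ) • g)) :
    ((Submodule.span ℂ {v | ∃ (k : ℕ) (x : EuclideanSpace ℂ (Fin n)),
        v = (A ^ k) (A x - (ContinuousLinearMap.adjoint A) x)} = ⊤)
      ↔ ¬ ∃ (r : ℝ) (v : EuclideanSpace ℂ (Fin n)), v ≠ 0 ∧ A v = (r : ℂ) • v)
    ∧
    ((Submodule.span ℂ {v | ∃ (k : ℕ) (x : EuclideanSpace ℂ (Fin n)),
        v = (A ^ k) (A x - (ContinuousLinearMap.adjoint A) x)} = ⊤)
      ↔ LinearIndependent ℂ (fun k : Fin n => (A ^ (k : ℕ)) g)) := by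
  classical
  rcases Nat.eq_zero_or_pos n with hn | hpos
  · subst hn
    have htop : ∀ (S : Submodule ℂ (EuclideanSpace ℂ (Fin 0))), S = ⊤ := by
      intro S
      apply Submodule.eq_top_iff'.mpr
      intro x
      have : x = 0 := Subsingleton.elim x 0
      simp [this]
    constructor
    · refine iff_of_true (htop _) ?_
      rintro ⟨r, v, hv0, -⟩
      exact hv0 (Subsingleton.elim v 0)
    · exact iff_of_true (htop _) linearIndependent_empty_type
  -- Notation
  set S : Submodule ℂ (EuclideanSpace ℂ (Fin n)) :=
    Submodule.span ℂ {v | ∃ (k : ℕ) (x : EuclideanSpace ℂ (Fin n)),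
      v = (A ^ k) (A x - (ContinuousLinearMap.adjoint A) x)} with hSdef
  -- basic facts
  have hadj : ∀ x, (ContinuousLinearMap.adjoint A) x
      = A x - Complex.I • ((inner ℂ g x : ℂ) • g) := by
    intro x
    rw [← hAI x]; abel
  have hpow : ∀ (k : ℕ) (x : EuclideanSpace ℂ (Fin n)),
      (A ^ k) (A x - (ContinuousLinearMap.adjoint A) x)
        = (Complex.I * (inner ℂ g x : ℂ)) • (A ^ k) g := by
    intro k x
    rw [hAI x, map_smul, map_smul, smul_smul]
  have hmemS : ∀ (k : ℕ) (x : EuclideanSpace ℂ (Fin n)),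
      (A ^ k) (A x - (ContinuousLinearMap.adjoint A) x) ∈ S :=
    fun k x => Submodule.subset_span ⟨k, x, rfl⟩
  have hsucc : ∀ (k : ℕ) (w : EuclideanSpace ℂ (Fin n)),
      A ((A ^ k) w) = (A ^ (k + 1)) w := by
    intro k w
    rw [pow_succ', ContinuousLinearMap.mul_apply]
  -- first equivalence
  have h12 : S = ⊤ ↔
      ¬ ∃ (r : ℝ) (v : EuclideanSpace ℂ (Fin n)), v ≠ 0 ∧ A v = (r : ℂ) • v := by
    constructor
    · intro hS
      rintro ⟨r, v, hv0, hAv⟩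
      -- ⟪g, v⟫ = 0
      have hgv : (inner ℂ g v : ℂ) = 0 := by
        have h1 : (inner ℂ v (A v - (ContinuousLinearMap.adjoint A) v) : ℂ) = 0 := by
          rw [inner_sub_right, ContinuousLinearMap.adjoint_inner_right, hAv,
            inner_smul_right, inner_smul_left, Complex.conj_ofReal]
          ring
        rw [hAI v, inner_smul_right, inner_smul_right, ← inner_conj_symm v g,
          Complex.mul_conj] at h1
        rcases mul_eq_zero.mp h1 with h | h
        · exact absurd h Complex.I_ne_zero
        · have : Complex.normSq (inner ℂ g v : ℂ) = 0 := by exact_mod_cast h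
          exact Complex.normSq_eq_zero.mp this
      have hAdv : (ContinuousLinearMap.adjoint A) v = (r : ℂ) • v := by
        rw [hadj v, hgv]; simp [hAv]
      have hpowv : ∀ k : ℕ, (inner ℂ ((A ^ k) g) v : ℂ) = 0 := by
        intro k
        induction k with
        | zero => simpa using hgv
        | succ k ih =>
          rw [← hsucc k g, ← ContinuousLinearMap.adjoint_inner_right, hAdv,
            inner_smul_right, ih, mul_zero]
      have hall : ∀ u ∈ S, (inner ℂ u v : ℂ) = 0 := by
        intro u hu
        induction hu using Submodule.span_induction with
        | mem w hw =>
          obtain ⟨k, x, rfl⟩ := hw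
          rw [hpow, inner_smul_left, hpowv, mul_zero]
        | zero => simp
        | add x y hx hy ihx ihy => rw [inner_add_left, ihx, ihy, add_zero]
        | smul a x hx ihx => rw [inner_smul_left, ihx, mul_zero]
      have hvv : (inner ℂ v v : ℂ) = 0 := hall v (hS ▸ Submodule.mem_top)
      exact hv0 (inner_self_eq_zero.mp hvv)
    · intro hnoeig
      by_contra hS
      exact hnoeig (aux_real_eigenvalue A g hAI hS)
  -- second equivalence
  have h13 : S = ⊤ ↔ LinearIndependent ℂ (fun k : Fin n => (A ^ (k : ℕ)) g) := by
    set W : Submodule ℂ (EuclideanSpace ℂ (Fin n)) :=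
      Submodule.span ℂ (Set.range fun k : Fin n => (A ^ (k : ℕ)) g) with hWdef
    have hfr : finrank ℂ (EuclideanSpace ℂ (Fin n)) = n := finrank_euclideanSpace_fin
    -- Cayley–Hamilton
    have hCH : (A ^ n) g
        = -∑ i ∈ Finset.range n,
            ((A : EuclideanSpace ℂ (Fin n) →ₗ[ℂ] _).charpoly.coeff i) • (A ^ i) g := by
      set L : EuclideanSpace ℂ (Fin n) →ₗ[ℂ] EuclideanSpace ℂ (Fin n) :=
        (A : EuclideanSpace ℂ (Fin n) →ₗ[ℂ] EuclideanSpace ℂ (Fin n)) with hLdef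
      have hdeg : L.charpoly.natDegree = n := by
        rw [LinearMap.charpoly_natDegree, hfr]
      have h0 : (Polynomial.aeval L L.charpoly) g = 0 := by
        rw [LinearMap.aeval_self_charpoly]; rfl
      rw [Polynomial.aeval_eq_sum_range] at h0
      rw [hdeg] at h0
      have hsum : (∑ i ∈ Finset.range (n + 1), L.charpoly.coeff i • L ^ i) g = 0 := h0
      rw [Finset.sum_range_succ] at hsum
      have hc : L.charpoly.coeff n = 1 := by
        have := L.charpoly_monic.coeff_natDegree
        rwa [hdeg] at this
      have happ : ∀ (i : ℕ) (v : EuclideanSpace ℂ (Fin n)), (L ^ i) v = (A ^ i) v := by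
        intro i
        induction i with
        | zero => intro v; simp
        | succ i ih =>
          intro v
          rw [pow_succ, pow_succ, Module.End.mul_apply, ContinuousLinearMap.mul_apply, ih]
          rfl
      have hsum' : (∑ i ∈ Finset.range n, L.charpoly.coeff i • (A ^ i) g)
          + (A ^ n) g = 0 := by
        have := hsum
        simp only [LinearMap.add_apply, LinearMap.sum_apply, LinearMap.smul_apply,
          hc, one_smul, happ] at this
        exact this
      linear_combination (norm := module) hsum'
    have hWinv : ∀ w ∈ W, A w ∈ W := by
      have hmemW : ∀ i : ℕ, i < n → (A ^ i) g ∈ W :=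
        fun i hi => Submodule.subset_span ⟨⟨i, hi⟩, rfl⟩
      have hAnW : (A ^ n) g ∈ W := by
        rw [hCH]
        exact W.neg_mem (Submodule.sum_mem W fun i hi =>
          W.smul_mem _ (hmemW i (Finset.mem_range.mp hi)))
      intro w hw
      induction hw using Submodule.span_induction with
      | mem v hv =>
        obtain ⟨k, rfl⟩ := hv
        rw [hsucc]
        rcases lt_or_ge ((k : ℕ) + 1) n with h | h
        · exact hmemW _ h
        · have : (k : ℕ) + 1 = n := le_antisymm (Nat.succ_le_of_lt k.2) h
          rw [this]; exact hAnW
      | zero => simpa using W.zero_mem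
      | add x y hx hy ihx ihy => simpa [map_add] using W.add_mem ihx ihy
      | smul a x hx ihx => simpa [map_smul] using W.smul_mem a ihx
    have hWall : ∀ m : ℕ, (A ^ m) g ∈ W := by
      intro m
      induction m with
      | zero =>
        have := Submodule.subset_span (R := ℂ) (M := EuclideanSpace ℂ (Fin n))
          (Set.mem_range_self (f := fun k : Fin n => (A ^ (k : ℕ)) g) ⟨0, hpos⟩)
        simpa [hWdef] using this
      | succ m ih =>
        rw [← hsucc]
        exact hWinv _ ih
    have hSW : S = W := by
      apply le_antisymm
      · rw [hSdef]
        apply Submodule.span_le.mpr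
        rintro v ⟨k, x, rfl⟩
        rw [hpow]
        exact W.smul_mem _ (hWall k)
      · rw [hWdef]
        apply Submodule.span_le.mpr
        rintro v ⟨k, rfl⟩
        show (A ^ (k : ℕ)) g ∈ S
        by_cases hg : g = 0
        · subst hg; simp
        · set c : ℂ := Complex.I * (inner ℂ g g : ℂ) with hcdef
          have hc0 : c ≠ 0 :=
            mul_ne_zero Complex.I_ne_zero (inner_self_ne_zero.mpr hg)
          have hmem : c • (A ^ (k : ℕ)) g ∈ S := by
            rw [← hpow]; exact hmemS _ g
          have : (A ^ (k : ℕ)) g = c⁻¹ • (c • (A ^ (k : ℕ)) g) := by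
            rw [smul_smul, inv_mul_cancel₀ hc0, one_smul]
          rw [this]
          exact S.smul_mem _ hmem
    rw [hSW]
    constructor
    · intro hW
      have hcard : Fintype.card (Fin n) = finrank ℂ (EuclideanSpace ℂ (Fin n)) := by
        rw [hfr, Fintype.card_fin]
      have hli := (basisOfTopLeSpanOfCardEqFinrank
        (fun k : Fin n => (A ^ (k : ℕ)) g) hW.ge hcard).linearIndependent
      rwa [coe_basisOfTopLeSpanOfCardEqFinrank] at hli
    · intro hli
      exact hli.span_eq_top_of_card_eq_finrank' (by rw [hfr, Fintype.card_fin])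
  exact ⟨h12, h13⟩
end

section
/- Let J be an n×n Jacobi matrix (n ≥ 3) with Im b_1 > 0, b_k real for k ≥ 2, and a_k > 0 for all k. Then J and its upper-left (n-2)×(n-2) corner J_{[1,n-2]} have no common eigenvalues. -/
def jacobiMatrix (n : ℕ) (b a : ℕ → ℂ) : Matrix (Fin n) (Fin n) ℂ :=
  Matrix.of fun i j =>
    if (i : ℕ) = (j : ℕ) then b ((i : ℕ) + 1)
    else if (i : ℕ) + 1 = (j : ℕ) then a ((i : ℕ) + 1)
    else if (j : ℕ) + 1 = (i : ℕ) then a ((j : ℕ) + 1)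
    else 0

def jext {m : ℕ} (v : Fin m → ℂ) (k : ℕ) : ℂ := if h : k < m then v ⟨k, h⟩ else 0

lemma sum_ite_coe {m : ℕ} (c : ℕ) (f : Fin m → ℂ) :
    ∑ j : Fin m, (if (j : ℕ) = c then f j else 0) = if h : c < m then f ⟨c, h⟩ else 0 := by
  split_ifs with h
  · have : ∀ j : Fin m, ((j : ℕ) = c) = (j = (⟨c, h⟩ : Fin m)) := by
      intro j; simp [Fin.ext_iff]
    simp only [this]
    exact Finset.sum_ite_eq' Finset.univ _ f |>.trans (by simp)
  · refine Finset.sum_eq_zero fun j _ => ?_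
    rw [if_neg]; omega

lemma jacobi_row0 {m : ℕ} (b a' : ℕ → ℂ) (v : Fin m → ℂ) (h0 : 0 < m) :
    (jacobiMatrix m b a').mulVec v ⟨0, h0⟩ = b 1 * jext v 0 + a' 1 * jext v 1 := by
  have key : ∀ j : Fin m,
      (jacobiMatrix m b a') ⟨0, h0⟩ j * v j
        = (if (j : ℕ) = 0 then b 1 * v j else 0) + (if (j : ℕ) = 1 then a' 1 * v j else 0) := by
    intro j
    simp only [jacobiMatrix, Matrix.of_apply]
    split_ifs
    all_goals try omega
    all_goals try exact False.elim (by assumption)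
    all_goals try simp
    all_goals ring
  simp only [Matrix.mulVec, dotProduct]
  rw [Finset.sum_congr rfl fun j _ => key j, Finset.sum_add_distrib, sum_ite_coe, sum_ite_coe]
  unfold jext
  split_ifs <;> ring

lemma jacobi_rowSucc {m : ℕ} (b a' : ℕ → ℂ) (v : Fin m → ℂ) (k : ℕ) (hk : k + 1 < m) :
    (jacobiMatrix m b a').mulVec v ⟨k + 1, hk⟩
      = a' (k + 1) * jext v k + b (k + 2) * jext v (k + 1) + a' (k + 2) * jext v (k + 2) := by
  have key : ∀ j : Fin m,
      (jacobiMatrix m b a') ⟨k + 1, hk⟩ j * v j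
        = (if (j : ℕ) = k then a' (k + 1) * v j else 0)
          + (if (j : ℕ) = k + 1 then b (k + 2) * v j else 0)
          + (if (j : ℕ) = k + 2 then a' (k + 2) * v j else 0) := by
    intro j
    simp only [jacobiMatrix, Matrix.of_apply]
    split_ifs
    all_goals try omega
    all_goals try exact False.elim (by assumption)
    all_goals try subst_vars
    all_goals try simp
    all_goals ring
  simp only [Matrix.mulVec, dotProduct]
  rw [Finset.sum_congr rfl fun j _ => key j, Finset.sum_add_distrib, Finset.sum_add_distrib,
    sum_ite_coe, sum_ite_coe, sum_ite_coe]
  unfold jext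
  split_ifs <;> ring

lemma jext_lt {m : ℕ} (v : Fin m → ℂ) (k : ℕ) (h : k < m) : jext v k = v ⟨k, h⟩ := dif_pos h

lemma jext_ge {m : ℕ} (v : Fin m → ℂ) (k : ℕ) (h : m ≤ k) : jext v k = 0 := dif_neg (by omega)

lemma rec0 {m : ℕ} (b a' : ℕ → ℂ) (v : Fin m → ℂ) (z : ℂ)
    (hv : (jacobiMatrix m b a').mulVec v = z • v) (h0 : 0 < m) :
    b 1 * jext v 0 + a' 1 * jext v 1 = z * jext v 0 := by
  have h := congrFun hv ⟨0, h0⟩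
  rw [jacobi_row0] at h
  rw [h, Pi.smul_apply, smul_eq_mul, jext_lt v 0 h0]

lemma recS {m : ℕ} (b a' : ℕ → ℂ) (v : Fin m → ℂ) (z : ℂ)
    (hv : (jacobiMatrix m b a').mulVec v = z • v) (k : ℕ) (hk : k + 1 < m) :
    a' (k + 1) * jext v k + b (k + 2) * jext v (k + 1) + a' (k + 2) * jext v (k + 2)
      = z * jext v (k + 1) := by
  have h := congrFun hv ⟨k + 1, hk⟩
  rw [jacobi_rowSucc] at h
  rw [h, Pi.smul_apply, smul_eq_mul, jext_lt v (k + 1) hk]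

lemma first_entry_ne_zero {m : ℕ} (hm : 0 < m) (b : ℕ → ℂ) (a : ℕ → ℝ)
    (ha : ∀ k, 1 ≤ k → k ≤ m - 1 → a k ≠ 0) (v : Fin m → ℂ) (z : ℂ)
    (hv : (jacobiMatrix m b (fun k => (a k : ℂ))).mulVec v = z • v) (hvne : v ≠ 0) :
    jext v 0 ≠ 0 := by
  intro h0
  apply hvne
  have key : ∀ k, jext v k = 0 ∧ jext v (k + 1) = 0 := by
    intro k
    induction k with
    | zero =>
      refine ⟨h0, ?_⟩
      by_cases h1 : 1 < m
      · have hr := rec0 b _ v z hv hm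
        rw [h0] at hr
        have : (a 1 : ℂ) * jext v 1 = 0 := by linear_combination hr
        rcases mul_eq_zero.1 this with h | h
        · exact absurd h (by exact_mod_cast ha 1 le_rfl (by omega))
        · exact h
      · exact jext_ge v 1 (by omega)
    | succ k ih =>
      refine ⟨ih.2, ?_⟩
      by_cases h2 : k + 2 < m
      · have hr := recS b _ v z hv k (by omega)
        rw [ih.1, ih.2] at hr
        have : (a (k + 2) : ℂ) * jext v (k + 2) = 0 := by linear_combination hr
        rcases mul_eq_zero.1 this with h | h
        · exact absurd h (by exact_mod_cast ha (k + 2) (by omega) (by omega))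
        · exact h
      · exact jext_ge v (k + 2) (by omega)
  funext i
  have := (key (i : ℕ)).1
  rwa [jext_lt v _ i.isLt, Fin.eta] at this

lemma im_cross (c α β : ℂ) (hc : c.im = 0) :
    ((starRingEnd ℂ) α * (c * β)).im + ((starRingEnd ℂ) β * (c * α)).im = 0 := by
  simp only [Complex.mul_im, Complex.mul_re, Complex.conj_re, Complex.conj_im, hc]
  ring

lemma im_diag (c α : ℂ) : ((starRingEnd ℂ) α * (c * α)).im = c.im * Complex.normSq α := by
  simp only [Complex.mul_im, Complex.mul_re, Complex.conj_re, Complex.conj_im,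
    Complex.normSq_apply]
  ring

lemma eigen_im_pos {m : ℕ} (hm : 0 < m) (b : ℕ → ℂ) (a : ℕ → ℝ)
    (hb1 : 0 < (b 1).im) (hbr : ∀ k, 2 ≤ k → k ≤ m → (b k).im = 0)
    (v : Fin m → ℂ) (z : ℂ)
    (hv : (jacobiMatrix m b (fun k => (a k : ℂ))).mulVec v = z • v)
    (hv0 : jext v 0 ≠ 0) : 0 < z.im := by
  set J := jacobiMatrix m b (fun k => (a k : ℂ)) with hJ
  have hsym : ∀ i j : Fin m, J i j = J j i := by
    intro i j
    simp only [hJ, jacobiMatrix, Matrix.of_apply]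
    split_ifs
    all_goals try omega
    all_goals try rfl
    all_goals simp_all
  have hoff : ∀ i j : Fin m, i ≠ j → (J i j).im = 0 := by
    intro i j h
    have h' : (i : ℕ) ≠ (j : ℕ) := fun hh => h (Fin.ext hh)
    simp only [hJ, jacobiMatrix, Matrix.of_apply]
    split_ifs
    all_goals try omega
    all_goals simp
  have hdiag : ∀ i : Fin m, J i i = b ((i : ℕ) + 1) := by
    intro i; simp [hJ, jacobiMatrix]
  set S := ∑ i, (starRingEnd ℂ) (v i) * (J.mulVec v i) with hSdef
  have hS1 : S.im = z.im * ∑ i, Complex.normSq (v i) := by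
    have h1 : S = z * ((∑ i, Complex.normSq (v i) : ℝ) : ℂ) := by
      rw [hSdef, hv]
      push_cast
      rw [Finset.mul_sum]
      refine Finset.sum_congr rfl fun i _ => ?_
      have : (starRingEnd ℂ) (v i) * ((z • v) i) = z * (v i * (starRingEnd ℂ) (v i)) := by
        simp only [Pi.smul_apply, smul_eq_mul]; ring
      rw [this, Complex.mul_conj]
    rw [h1]
    simp [Complex.mul_im]
  have hS2 : S.im = (b 1).im * Complex.normSq (v ⟨0, hm⟩) := by
    set N : Fin m → Fin m → ℝ := fun i j => ((starRingEnd ℂ) (v i) * (J i j * v j)).im with hN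
    have hSim : S.im = ∑ i, ∑ j, N i j := by
      rw [hSdef]
      rw [Complex.im_sum]
      refine Finset.sum_congr rfl fun i _ => ?_
      rw [show J.mulVec v i = ∑ j, J i j * v j from rfl, Finset.mul_sum, Complex.im_sum]
    have hNsum : ∀ i j : Fin m, N i j + N j i = if i = j then 2 * N i i else 0 := by
      intro i j
      by_cases h : i = j
      · subst h; rw [if_pos rfl]; ring
      · rw [if_neg h, hN]
        simp only
        rw [← hsym i j]
        exact im_cross (J i j) (v i) (v j) (hoff i j h)
    have hT : (∑ i, ∑ j, N i j) = ∑ i, N i i := by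
      have h2 : (∑ i, ∑ j, N i j) + (∑ i, ∑ j, N i j) = ∑ i, ∑ j, (N i j + N j i) := by
        conv_lhs => rw [show (∑ i, ∑ j, N i j) + (∑ i, ∑ j, N i j)
          = (∑ i, ∑ j, N i j) + (∑ j, ∑ i, N i j) from by rw [Finset.sum_comm]]
        rw [← Finset.sum_add_distrib]
        exact Finset.sum_congr rfl fun i _ => by rw [← Finset.sum_add_distrib]
      have h3 : (∑ i, ∑ j : Fin m, (N i j + N j i)) = ∑ i, 2 * N i i := by
        refine Finset.sum_congr rfl fun i _ => ?_
        rw [Finset.sum_congr rfl fun j _ => hNsum i j]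
        simp
      have := h2.trans h3
      have h4 : (∑ i, 2 * N i i) = 2 * ∑ i, N i i := by rw [Finset.mul_sum]
      linarith [this, h4]
    have hdiagval : ∀ i : Fin m, N i i = (b ((i : ℕ) + 1)).im * Complex.normSq (v i) := by
      intro i; rw [hN]; simp only; rw [hdiag i]; exact im_diag _ _
    have hsingle : (∑ i, N i i) = (b 1).im * Complex.normSq (v ⟨0, hm⟩) := by
      rw [Finset.sum_eq_single (⟨0, hm⟩ : Fin m)]
      · rw [hdiagval]
      · intro i _ hne
        rw [hdiagval]
        have : 1 ≤ (i : ℕ) := by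
          rcases Nat.eq_zero_or_pos (i : ℕ) with h | h
          · exact absurd (Fin.ext h) hne
          · exact h
        rw [hbr ((i : ℕ) + 1) (by omega) (by have := i.isLt; omega)]
        ring
      · intro h; exact absurd (Finset.mem_univ _) h
    rw [hSim, hT, hsingle]
  have hpos0 : 0 < Complex.normSq (v ⟨0, hm⟩) := by
    rw [jext_lt v 0 hm] at hv0
    exact Complex.normSq_pos.2 hv0
  have hle : Complex.normSq (v ⟨0, hm⟩) ≤ ∑ i, Complex.normSq (v i) :=
    Finset.single_le_sum (fun i _ => Complex.normSq_nonneg (v i)) (Finset.mem_univ _)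
  have := hS1.symm.trans hS2
  nlinarith

/-- **A dissipative Jacobi matrix with rank-one imaginary part (`Im b₁ > 0`, `bₖ` real for
`k ≥ 2`, `aₖ > 0`) and its `(n-2) × (n-2)` upper-left corner have no common eigenvalues**
(`n ≥ 3`). -/
theorem dissipative_jacobi_no_common_eigenvalue_n_sub_two
    (n : ℕ) (hn : 3 ≤ n) (b : ℕ → ℂ) (a : ℕ → ℝ)
    (hb1 : 0 < (b 1).im) (hbreal : ∀ k, 2 ≤ k → k ≤ n → (b k).im = 0)
    (ha : ∀ k, 1 ≤ k → k ≤ n - 1 → 0 < a k) (z : ℂ) :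
    ¬ ((∃ v : Fin n → ℂ, v ≠ 0 ∧
          (jacobiMatrix n b (fun k => (a k : ℂ))).mulVec v = z • v) ∧
       (∃ w : Fin (n - 2) → ℂ, w ≠ 0 ∧
          (jacobiMatrix (n - 2) b (fun k => (a k : ℂ))).mulVec w = z • w)) := by
  rintro ⟨⟨v, hvne, hv⟩, ⟨w, hwne, hw⟩⟩
  have hm2 : 0 < n - 2 := by omega
  have hn0 : 0 < n := by omega
  have haRne : ∀ k, 1 ≤ k → k ≤ n - 1 → a k ≠ 0 := fun k h1 h2 => (ha k h1 h2).ne'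
  have hane : ∀ k, 1 ≤ k → k ≤ n - 1 → (a k : ℂ) ≠ 0 := fun k h1 h2 => by
    exact_mod_cast haRne k h1 h2
  have hU0 : jext v 0 ≠ 0 :=
    first_entry_ne_zero hn0 b a (fun k h1 h2 => haRne k h1 (by omega)) v z hv hvne
  have hW0 : jext w 0 ≠ 0 :=
    first_entry_ne_zero hm2 b a (fun k h1 h2 => haRne k h1 (by omega)) w z hw hwne
  have him : 0 < z.im :=
    eigen_im_pos hm2 b a hb1 (fun k h1 h2 => hbreal k h1 (by omega)) w z hw hW0
  have hprop : ∀ k, (k ≤ n - 2 → jext v 0 * jext w k = jext w 0 * jext v k)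
      ∧ (k + 1 ≤ n - 2 → jext v 0 * jext w (k + 1) = jext w 0 * jext v (k + 1)) := by
    intro k
    induction k with
    | zero =>
      refine ⟨fun _ => by ring, fun _ => ?_⟩
      have hrv := rec0 b _ v z hv hn0
      have hrw := rec0 b _ w z hw hm2
      apply mul_left_cancel₀ (hane 1 le_rfl (by omega))
      linear_combination jext v 0 * hrw - jext w 0 * hrv
    | succ k ih =>
      refine ⟨ih.2, fun hk2 => ?_⟩
      have hrv := recS b _ v z hv k (by omega)
      have hrw := recS b _ w z hw k (by omega)
      have h1 := ih.1 (by omega)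
      have h2 := ih.2 (by omega)
      apply mul_left_cancel₀ (hane (k + 2) (by omega) (by omega))
      linear_combination jext v 0 * hrw - jext w 0 * hrv - ((a (k + 1) : ℂ)) * h1
        - (b (k + 2) - z) * h2
  have hWn2 : jext w (n - 2) = 0 := jext_ge w (n - 2) le_rfl
  have hUn2 : jext v (n - 2) = 0 := by
    have h := (hprop (n - 2)).1 le_rfl
    rw [hWn2, mul_zero] at h
    exact (mul_eq_zero.1 h.symm).resolve_left hW0
  have e1 : n - 2 + 1 = n - 1 := by omega
  have e2 : n - 2 + 2 = n := by omega
  have hUn : jext v n = 0 := jext_ge v n le_rfl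
  have hrlast := recS b _ v z hv (n - 2) (by omega)
  rw [e1, e2, hUn2, hUn] at hrlast
  by_cases hlast : jext v (n - 1) = 0
  · have back : ∀ d, d ≤ n - 2 → jext v (n - 2 - d) = 0 ∧ jext v (n - 1 - d) = 0 := by
      intro d
      induction d with
      | zero => intro _; simpa using ⟨hUn2, hlast⟩
      | succ d ihd =>
        intro hd
        have ih := ihd (by omega)
        set k := n - 3 - d with hkdef
        have hk1 : n - 2 - d = k + 1 := by omega
        have hk2 : n - 1 - d = k + 2 := by omega
        have i1 : jext v (k + 1) = 0 := by rw [← hk1]; exact ih.1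
        have i2 : jext v (k + 2) = 0 := by rw [← hk2]; exact ih.2
        have hr := recS b _ v z hv k (by omega)
        rw [i1, i2] at hr
        have h0 : (a (k + 1) : ℂ) * jext v k = 0 := by linear_combination hr
        have hk0 : jext v k = 0 :=
          (mul_eq_zero.1 h0).resolve_left (hane (k + 1) (by omega) (by omega))
        constructor
        · rw [show n - 2 - (d + 1) = k from by omega]; exact hk0
        · rw [show n - 1 - (d + 1) = k + 1 from by omega]; exact i1
    have h := (back (n - 2) le_rfl).1
    rw [show n - 2 - (n - 2) = 0 from by omega] at h
    exact hU0 h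
  · have hzb : b n = z := by
      have h' : b n * jext v (n - 1) = z * jext v (n - 1) := by linear_combination hrlast
      exact mul_right_cancel₀ hlast h'
    have : z.im = 0 := by rw [← hzb]; exact hbreal n (by omega) le_rfl
    linarith
end

section
/- Let J be an n×n Jacobi matrix with Im b_1 > 0, b_k real for k = 2,...,n, and a_k > 0 for all k. Then every eigenvalue of J lies in the open upper half-plane (has strictly positive imaginary part). -/
private lemma sum_nat_ite {n : ℕ} (c : ℕ) (hc : c < n) (f : Fin n → ℂ) :
    ∑ j : Fin n, (if c = (j : ℕ) then f j else 0) = f ⟨c, hc⟩ := by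
  rw [Finset.sum_eq_single (⟨c, hc⟩ : Fin n)]
  · simp
  · intro j _ hj
    rw [if_neg]
    intro h; exact hj (by ext; simp [← h])
  · simp

private lemma sum_nat_ite0 {n : ℕ} (c : ℕ) (hc : ¬ c < n) (f : Fin n → ℂ) :
    ∑ j : Fin n, (if c = (j : ℕ) then f j else 0) = 0 := by
  apply Finset.sum_eq_zero
  intro j _
  rw [if_neg]
  intro h; exact hc (h ▸ j.2)

private lemma jacobi_entry (n : ℕ) (b a' : ℕ → ℂ) (v : Fin n → ℂ) (i j : Fin n) :
    jacobiMatrix n b a' i j * v j =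
      (if (i : ℕ) = (j : ℕ) then b ((i : ℕ) + 1) * v j else 0)
      + (if (i : ℕ) + 1 = (j : ℕ) then a' ((i : ℕ) + 1) * v j else 0)
      + (if (i : ℕ) ≠ 0 ∧ (i : ℕ) - 1 = (j : ℕ) then a' (i : ℕ) * v j else 0) := by
  unfold jacobiMatrix
  simp only [Matrix.of_apply]
  by_cases h1 : (i : ℕ) = (j : ℕ)
  · have h2 : ¬ ((i : ℕ) + 1 = (j : ℕ)) := by omega
    have h3 : ¬ ((i : ℕ) ≠ 0 ∧ (i : ℕ) - 1 = (j : ℕ)) := by omega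
    rw [if_pos h1, if_pos h1, if_neg h2, if_neg h3]; ring
  · by_cases h2 : (i : ℕ) + 1 = (j : ℕ)
    · have h3 : ¬ ((i : ℕ) ≠ 0 ∧ (i : ℕ) - 1 = (j : ℕ)) := by omega
      rw [if_neg h1, if_neg h1, if_pos h2, if_pos h2, if_neg h3]; ring
    · by_cases h4 : (j : ℕ) + 1 = (i : ℕ)
      · have h3 : (i : ℕ) ≠ 0 ∧ (i : ℕ) - 1 = (j : ℕ) := by omega
        rw [if_neg h1, if_neg h1, if_neg h2, if_neg h2, if_pos h4, if_pos h3]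
        have : (j : ℕ) + 1 = (i : ℕ) := h4
        rw [this]; ring
      · have h3 : ¬ ((i : ℕ) ≠ 0 ∧ (i : ℕ) - 1 = (j : ℕ)) := by omega
        rw [if_neg h1, if_neg h1, if_neg h2, if_neg h2, if_neg h4, if_neg h3]; ring

private lemma jacobi_mulVec (n : ℕ) (b a' : ℕ → ℂ) (v : Fin n → ℂ) (i : Fin n) :
    (jacobiMatrix n b a').mulVec v i =
      b ((i : ℕ) + 1) * v i
      + (if h : (i : ℕ) + 1 < n then a' ((i : ℕ) + 1) * v ⟨(i : ℕ) + 1, h⟩ else 0)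
      + (if h : 0 < (i : ℕ) then
          a' (i : ℕ) * v ⟨(i : ℕ) - 1, Nat.lt_of_le_of_lt (Nat.sub_le _ _) i.2⟩ else 0) := by
  have : (jacobiMatrix n b a').mulVec v i = ∑ j : Fin n, jacobiMatrix n b a' i j * v j := rfl
  rw [this]
  simp only [jacobi_entry]
  rw [Finset.sum_add_distrib, Finset.sum_add_distrib]
  congr 1
  · congr 1
    · rw [sum_nat_ite (i : ℕ) i.2]
    · by_cases h : (i : ℕ) + 1 < n
      · rw [dif_pos h, sum_nat_ite ((i : ℕ) + 1) h]
      · rw [dif_neg h, sum_nat_ite0 ((i : ℕ) + 1) h]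
  · by_cases h : 0 < (i : ℕ)
    · rw [dif_pos h]
      have : ∀ j : Fin n, (if (i : ℕ) ≠ 0 ∧ (i : ℕ) - 1 = (j : ℕ) then a' (i : ℕ) * v j else 0)
          = (if (i : ℕ) - 1 = (j : ℕ) then a' (i : ℕ) * v j else 0) := by
        intro j
        by_cases hj : (i : ℕ) - 1 = (j : ℕ)
        · rw [if_pos ⟨by omega, hj⟩, if_pos hj]
        · rw [if_neg (by tauto), if_neg hj]
      simp only [this]
      rw [sum_nat_ite ((i : ℕ) - 1) (Nat.lt_of_le_of_lt (Nat.sub_le _ _) i.2)]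
    · rw [dif_neg h]
      apply Finset.sum_eq_zero
      intro j _
      rw [if_neg (by omega)]

/-- **Every eigenvalue of a dissipative Jacobi matrix with rank-one imaginary part lies in
the open upper half-plane** (`Im b₁ > 0`, `bₖ` real for `k ≥ 2`, `aₖ > 0`). -/
theorem dissipative_jacobi_eigenvalue_im_pos
    (n : ℕ) (b : ℕ → ℂ) (a : ℕ → ℝ)
    (hb1 : 0 < (b 1).im) (hbreal : ∀ k, 2 ≤ k → k ≤ n → (b k).im = 0)
    (ha : ∀ k, 1 ≤ k → k ≤ n - 1 → 0 < a k)
    (z : ℂ) (v : Fin n → ℂ) (hv : v ≠ 0)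
    (hev : (jacobiMatrix n b (fun k => (a k : ℂ))).mulVec v = z • v) :
    0 < z.im := by
  -- n > 0
  have hn : 0 < n := by
    rcases Nat.eq_zero_or_pos n with h | h
    · exfalso; apply hv; funext i; exact absurd i.2 (by omega)
    · exact h
  set a' : ℕ → ℂ := fun k => (a k : ℂ) with ha'
  -- row equations
  have hrow : ∀ i : Fin n,
      b ((i : ℕ) + 1) * v i
      + (if h : (i : ℕ) + 1 < n then a' ((i : ℕ) + 1) * v ⟨(i : ℕ) + 1, h⟩ else 0)
      + (if h : 0 < (i : ℕ) then
          a' (i : ℕ) * v ⟨(i : ℕ) - 1, Nat.lt_of_le_of_lt (Nat.sub_le _ _) i.2⟩ else 0)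
      = z * v i := by
    intro i
    rw [← jacobi_mulVec, hev]; rfl
  -- Step 1: v 0 ≠ 0
  have hv0 : v ⟨0, hn⟩ ≠ 0 := by
    intro h0
    apply hv
    have key : ∀ k, ∀ hk : k < n, v ⟨k, hk⟩ = 0 := by
      intro k
      induction k using Nat.strong_induction_on with
      | _ k ih =>
        intro hk
        match k with
        | 0 => exact h0
        | (m + 1) =>
          have hm : m < n := by omega
          have hrm := hrow ⟨m, hm⟩
          simp only at hrm
          rw [dif_pos hk] at hrm
          have hvm : v ⟨m, hm⟩ = 0 := ih m (by omega) hm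
          rw [hvm] at hrm
          have hprev : (if h : 0 < m then
              a' m * v ⟨m - 1, Nat.lt_of_le_of_lt (Nat.sub_le _ _) hm⟩ else 0) = 0 := by
            by_cases h : 0 < m
            · rw [dif_pos h, ih (m - 1) (by omega) _]; ring
            · rw [dif_neg h]
          rw [hprev] at hrm
          have hne : a' (m + 1) ≠ 0 := by
            simp only [ha', ne_eq, Complex.ofReal_eq_zero]
            exact ne_of_gt (ha (m + 1) (by omega) (by omega))
          have : a' (m + 1) * v ⟨m + 1, hk⟩ = 0 := by
            have := hrm
            ring_nf at this ⊢
            linear_combination this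
          exact (mul_eq_zero.mp this).resolve_left hne
    funext i
    have := key (i : ℕ) i.2
    simpa using this
  -- Step 2: quadratic form
  set S : ℂ := ∑ i : Fin n, ∑ j : Fin n,
    (starRingEnd ℂ) (v i) * jacobiMatrix n b a' i j * v j with hS
  have hS1 : S = z * ∑ i : Fin n, (Complex.normSq (v i) : ℂ) := by
    rw [hS, Finset.mul_sum]
    apply Finset.sum_congr rfl
    intro i _
    have : ∑ j : Fin n, (starRingEnd ℂ) (v i) * jacobiMatrix n b a' i j * v j
        = (starRingEnd ℂ) (v i) * ∑ j : Fin n, jacobiMatrix n b a' i j * v j := by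
      rw [Finset.mul_sum]; apply Finset.sum_congr rfl; intro j _; ring
    rw [this]
    have h2 : ∑ j : Fin n, jacobiMatrix n b a' i j * v j = z * v i := by
      have : (jacobiMatrix n b a').mulVec v i = z * v i := by rw [hev]; rfl
      rw [← this]; rfl
    rw [h2]
    rw [Complex.normSq_eq_conj_mul_self]
    ring
  -- conjugate of S
  have hSconj : S - (starRingEnd ℂ) S
      = (starRingEnd ℂ) (v ⟨0, hn⟩) * (b 1 - (starRingEnd ℂ) (b 1)) * v ⟨0, hn⟩ := by
    have hconjS : (starRingEnd ℂ) S = ∑ i : Fin n, ∑ j : Fin n,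
        (starRingEnd ℂ) (v i) * (starRingEnd ℂ) (jacobiMatrix n b a' j i) * v j := by
      rw [hS, map_sum]
      rw [Finset.sum_comm]
      apply Finset.sum_congr rfl; intro i _
      rw [map_sum]
      apply Finset.sum_congr rfl; intro j _
      rw [map_mul, map_mul, Complex.conj_conj]
      ring
    rw [hconjS, hS, ← Finset.sum_sub_distrib]
    have hsym : ∀ i j : Fin n, jacobiMatrix n b a' j i = jacobiMatrix n b a' i j := by
      intro i j
      unfold jacobiMatrix
      simp only [Matrix.of_apply]
      split_ifs <;> first | rfl | (congr 1; omega) | (exfalso; omega)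
    have hterm : ∀ i j : Fin n,
        ((starRingEnd ℂ) (v i) * jacobiMatrix n b a' i j * v j
          - (starRingEnd ℂ) (v i) * (starRingEnd ℂ) (jacobiMatrix n b a' j i) * v j)
        = if (i : ℕ) = 0 ∧ (j : ℕ) = 0 then
            (starRingEnd ℂ) (v i) * (b 1 - (starRingEnd ℂ) (b 1)) * v j else 0 := by
      intro i j
      rw [hsym i j]
      by_cases hij : (i : ℕ) = 0 ∧ (j : ℕ) = 0
      · rw [if_pos hij]
        have hJ : jacobiMatrix n b a' i j = b 1 := by
          unfold jacobiMatrix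
          simp only [Matrix.of_apply]
          rw [if_pos (by omega : (i : ℕ) = (j : ℕ)), hij.1]
        rw [hJ]; ring
      · rw [if_neg hij]
        have hreal : (starRingEnd ℂ) (jacobiMatrix n b a' i j) = jacobiMatrix n b a' i j := by
          unfold jacobiMatrix
          simp only [Matrix.of_apply]
          split_ifs with h1 h2 h3
          · apply Complex.conj_eq_iff_im.mpr
            apply hbreal
            · omega
            · have := i.2; omega
          · simp [ha']
          · simp [ha']
          · simp
        rw [hreal]; ring
    have : ∀ i : Fin n, ∑ j : Fin n,
        ((starRingEnd ℂ) (v i) * jacobiMatrix n b a' i j * v j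
          - (starRingEnd ℂ) (v i) * (starRingEnd ℂ) (jacobiMatrix n b a' j i) * v j)
        = if (i : ℕ) = 0 then
            (starRingEnd ℂ) (v i) * (b 1 - (starRingEnd ℂ) (b 1)) * v ⟨0, hn⟩ else 0 := by
      intro i
      simp only [hterm]
      by_cases hi : (i : ℕ) = 0
      · rw [if_pos hi]
        have : ∀ j : Fin n, (if (i : ℕ) = 0 ∧ (j : ℕ) = 0 then
            (starRingEnd ℂ) (v i) * (b 1 - (starRingEnd ℂ) (b 1)) * v j else 0)
            = (if (0 : ℕ) = (j : ℕ) then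
            (starRingEnd ℂ) (v i) * (b 1 - (starRingEnd ℂ) (b 1)) * v j else 0) := by
          intro j
          by_cases hj : (j : ℕ) = 0
          · rw [if_pos ⟨hi, hj⟩, if_pos hj.symm]
          · rw [if_neg (by tauto), if_neg (by omega)]
        simp only [this]
        rw [sum_nat_ite 0 hn]
      · rw [if_neg hi]
        apply Finset.sum_eq_zero
        intro j _
        rw [if_neg (by tauto)]
    simp only [Finset.sum_sub_distrib] at *
    rw [show (∑ i : Fin n, ∑ j : Fin n, (starRingEnd ℂ) (v i) * jacobiMatrix n b a' i j * v j)
        - (∑ i : Fin n, ∑ j : Fin n,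
            (starRingEnd ℂ) (v i) * (starRingEnd ℂ) (jacobiMatrix n b a' j i) * v j)
        = ∑ i : Fin n, ((∑ j : Fin n, (starRingEnd ℂ) (v i) * jacobiMatrix n b a' i j * v j)
          - ∑ j : Fin n, (starRingEnd ℂ) (v i) * (starRingEnd ℂ) (jacobiMatrix n b a' j i) * v j)
        from (Finset.sum_sub_distrib _ _).symm]
    simp only [← Finset.sum_sub_distrib, this]
    have h0 : ∀ i : Fin n, ((i : ℕ) = 0) = (i = ⟨0, hn⟩) := by
      intro i; ext
      constructor
      · intro h; ext; simpa using h
      · intro h; rw [h]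
    simp only [h0]
    rw [Finset.sum_ite_eq' Finset.univ (⟨0, hn⟩ : Fin n)]
    simp
  -- now compute imaginary parts
  have him : S.im = (b 1).im * Complex.normSq (v ⟨0, hn⟩) := by
    have h1 : S - (starRingEnd ℂ) S = (2 * S.im : ℝ) * Complex.I := by
      exact_mod_cast Complex.sub_conj S
    have h2 : (b 1) - (starRingEnd ℂ) (b 1) = (2 * (b 1).im : ℝ) * Complex.I := by
      exact_mod_cast Complex.sub_conj (b 1)
    rw [h2] at hSconj
    rw [h1] at hSconj
    have h3 : ((2 * S.im : ℝ) : ℂ) * Complex.I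
        = ((2 * ((b 1).im * Complex.normSq (v ⟨0, hn⟩)) : ℝ) : ℂ) * Complex.I := by
      rw [hSconj]
      push_cast
      rw [Complex.normSq_eq_conj_mul_self]
      push_cast
      ring
    have h4 : (2 : ℝ) * S.im = 2 * ((b 1).im * Complex.normSq (v ⟨0, hn⟩)) := by
      have := mul_right_cancel₀ (Complex.I_ne_zero) h3
      exact_mod_cast this
    linarith
  have hSim : S.im = z.im * ∑ i : Fin n, Complex.normSq (v i) := by
    rw [hS1]
    have : ((∑ i : Fin n, (Complex.normSq (v i) : ℂ))) = ((∑ i : Fin n, Complex.normSq (v i) : ℝ) : ℂ) := by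
      push_cast; ring
    rw [this]
    simp [Complex.mul_im]
  have hNpos : 0 < ∑ i : Fin n, Complex.normSq (v i) := by
    apply Finset.sum_pos'
    · intro i _; exact Complex.normSq_nonneg _
    · exact ⟨⟨0, hn⟩, Finset.mem_univ _, Complex.normSq_pos.mpr hv0⟩
  have hfinal : z.im * ∑ i : Fin n, Complex.normSq (v i)
      = (b 1).im * Complex.normSq (v ⟨0, hn⟩) := by
    rw [← hSim, him]
  have hpos : 0 < (b 1).im * Complex.normSq (v ⟨0, hn⟩) :=
    mul_pos hb1 (Complex.normSq_pos.mpr hv0)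
  nlinarith [hNpos, hpos, hfinal]
end

section
/- Let J be an n×n Jacobi matrix with Im b_1 > 0, b_k real for k ≥ 2, a_k > 0 for all k. If z_0 is an eigenvalue of J of algebraic multiplicity l, then for every j = 1,...,n-1: J_{[1,j]} - z_0 I is invertible, and z_0 is a zero of order l of the function 1/m_-(z,j+1) - a_j² m_+(z,j); in particular, 1/m_-(z_0, j+1) = a_j² m_+(z_0, j), where m_-(z,j+1) = ((J_{[1,j]} - zI)^{-1}δ_j, δ_j) and m_+(z,j) = ((J_{[j+1,n]} - zI)^{-1}δ_1, δ_1). -/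
/-- The diagonal resolvent entry `((J - z)⁻¹ δᵢ, δᵢ)` of an `m × m` Jacobi matrix,
as a function of `z`. -/
noncomputable def jacobiResolventEntry (m : ℕ) (b a : ℕ → ℂ) (i : Fin m) (z : ℂ) : ℂ :=
  (jacobiMatrix m b a - z • 1)⁻¹ i i

namespace JacobiAux
open Matrix Complex

noncomputable def dd (b a : ℕ → ℂ) (m : ℕ) (z : ℂ) : ℂ := (jacobiMatrix m b a - z • 1).det

lemma Jz_apply (m : ℕ) (b a : ℕ → ℂ) (z : ℂ) (i j : Fin m) :
    (jacobiMatrix m b a - z • 1) i j =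
      (if (i : ℕ) = (j : ℕ) then b ((i : ℕ) + 1) - z
      else if (i : ℕ) + 1 = (j : ℕ) then a ((i : ℕ) + 1)
      else if (j : ℕ) + 1 = (i : ℕ) then a ((j : ℕ) + 1) else 0) := by
  simp only [Matrix.sub_apply, Matrix.smul_apply, Matrix.one_apply, jacobiMatrix, Matrix.of_apply]
  rcases eq_or_ne (i : ℕ) (j : ℕ) with h | h
  · have : i = j := Fin.ext h
    simp [this]
  · have : i ≠ j := fun hh => h (by rw [hh])
    simp [h, this]

lemma dd_zero (b a : ℕ → ℂ) (z : ℂ) : dd b a 0 z = 1 := by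
  simp [dd]

lemma dd_one (b a : ℕ → ℂ) (z : ℂ) : dd b a 1 z = b 1 - z := by
  simp [dd, Matrix.det_fin_one, Jz_apply, jacobiMatrix]

lemma dd_rec (b a : ℕ → ℂ) (m : ℕ) (z : ℂ) :
    dd b a (m + 2) z =
      (b (m + 2) - z) * dd b a (m + 1) z - (a (m + 1))^2 * dd b a m z := by
  set A : Matrix (Fin (m+2)) (Fin (m+2)) ℂ := jacobiMatrix (m+2) b a - z • 1 with hA
  have hAapp : ∀ i j : Fin (m+2), A i j =
      (if (i : ℕ) = (j : ℕ) then b ((i : ℕ) + 1) - z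
      else if (i : ℕ) + 1 = (j : ℕ) then a ((i : ℕ) + 1)
      else if (j : ℕ) + 1 = (i : ℕ) then a ((j : ℕ) + 1) else 0) := Jz_apply _ b a z
  have hminor1 : A.submatrix Fin.castSucc Fin.castSucc = jacobiMatrix (m+1) b a - z • 1 := by
    ext i j
    rw [Matrix.submatrix_apply, hAapp, Jz_apply]
    simp
  set S : Matrix (Fin (m+1)) (Fin (m+1)) ℂ :=
    A.submatrix (Fin.last (m+1)).succAbove ((Fin.castSucc (Fin.last m)).succAbove) with hS
  have hminor2 : S.submatrix Fin.castSucc Fin.castSucc = jacobiMatrix m b a - z • 1 := by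
    ext i j
    rw [Matrix.submatrix_apply, hS, Matrix.submatrix_apply, Fin.succAbove_last_apply,
      Fin.succAbove_castSucc_of_lt _ _ (Fin.castSucc_lt_last j), hAapp, Jz_apply]
    simp
  have hdetS : S.det = a (m+1) * dd b a m z := by
    rw [det_succ_column S (Fin.last m), Fin.sum_univ_castSucc]
    have h0 : ∀ i : Fin m,
        (-1 : ℂ) ^ ((Fin.castSucc i : ℕ) + (Fin.last m : ℕ)) * S (Fin.castSucc i) (Fin.last m) *
          det (S.submatrix (Fin.castSucc i).succAbove (Fin.last m).succAbove) = 0 := by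
      intro i
      have : S (Fin.castSucc i) (Fin.last m) = 0 := by
        rw [hS, Matrix.submatrix_apply, Fin.succAbove_last_apply, Fin.succAbove_castSucc_self,
          hAapp]
        simp only [Fin.coe_castSucc, Fin.val_succ, Fin.val_last]
        have : (i:ℕ) < m := i.isLt
        rw [if_neg (by omega), if_neg (by omega), if_neg (by omega)]
      simp [this]
    rw [Finset.sum_eq_zero (fun i _ => h0 i), zero_add]
    have hval : S (Fin.last m) (Fin.last m) = a (m+1) := by
      rw [hS, Matrix.submatrix_apply, Fin.succAbove_last_apply, Fin.succAbove_castSucc_self, hAapp]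
      simp only [Fin.coe_castSucc, Fin.val_succ, Fin.val_last]
      split_ifs <;> first | rfl | (exfalso; omega)
    have hsub : S.submatrix (Fin.last m).succAbove (Fin.last m).succAbove
        = jacobiMatrix m b a - z • 1 := by
      rw [Fin.succAbove_last, hminor2]
    rw [hval, hsub]
    have : ((-1 : ℂ)) ^ ((Fin.last m : ℕ) + (Fin.last m : ℕ)) = 1 := by
      simp [← two_mul, pow_mul]
    rw [this, one_mul, dd]
  rw [dd, det_succ_row A (Fin.last (m+1)), Fin.sum_univ_castSucc, Fin.sum_univ_castSucc]
  have h0 : ∀ j : Fin m,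
      (-1 : ℂ) ^ ((Fin.last (m+1) : ℕ) + ((Fin.castSucc (Fin.castSucc j)) : ℕ)) *
        A (Fin.last (m+1)) (Fin.castSucc (Fin.castSucc j)) *
        det (A.submatrix (Fin.last (m+1)).succAbove (Fin.castSucc (Fin.castSucc j)).succAbove)
        = 0 := by
    intro j
    have : A (Fin.last (m+1)) (Fin.castSucc (Fin.castSucc j)) = 0 := by
      rw [hAapp]
      simp only [Fin.coe_castSucc, Fin.val_last]
      have : (j:ℕ) < m := j.isLt
      rw [if_neg (by omega), if_neg (by omega), if_neg (by omega)]
    simp [this]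
  rw [Finset.sum_eq_zero (fun j _ => h0 j), zero_add]
  have hd : A (Fin.last (m+1)) (Fin.last (m+1)) = b (m+2) - z := by
    rw [hAapp]; simp
  have ho : A (Fin.last (m+1)) (Fin.castSucc (Fin.last m)) = a (m+1) := by
    rw [hAapp]
    simp only [Fin.coe_castSucc, Fin.val_last]
    split_ifs <;> first | rfl | (exfalso; omega)
  have hsub1 : A.submatrix (Fin.last (m+1)).succAbove (Fin.last (m+1)).succAbove
      = jacobiMatrix (m+1) b a - z • 1 := by rw [Fin.succAbove_last]; exact hminor1
  have hsgn1 : ((-1 : ℂ)) ^ ((Fin.last (m+1) : ℕ) + (Fin.last (m+1) : ℕ)) = 1 := by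
    simp [← two_mul, pow_mul]
  have hsgn2 : ((-1 : ℂ)) ^ ((Fin.last (m+1) : ℕ) + ((Fin.castSucc (Fin.last m)) : ℕ)) = -1 := by
    have h1 : ((Fin.castSucc (Fin.last m)) : ℕ) = m := rfl
    have h2 : ((Fin.last (m+1) : Fin (m+2)) : ℕ) = m + 1 := rfl
    rw [h1, h2]
    have : m + 1 + m = 2 * m + 1 := by omega
    rw [this, pow_succ, pow_mul]
    simp
  rw [hd, ho, hsub1, hsgn1, hsgn2, ← hS, hdetS]
  have e1 : (jacobiMatrix (m+1) b a - z • 1).det = dd b a (m+1) z := rfl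
  rw [e1]
  ring

lemma dd_split (b a : ℕ → ℂ) (i : ℕ) (z : ℂ) :
    ∀ m, 1 ≤ m →
      dd b a (i + 1 + m) z
        = dd b a (i+1) z * dd (fun k => b (i+1+k)) (fun k => a (i+1+k)) m z
          - (a (i+1))^2 * dd b a i z *
              dd (fun k => b (i+2+k)) (fun k => a (i+2+k)) (m-1) z := by
  intro m
  induction m using Nat.strong_induction_on with
  | _ m ih =>
  intro hm
  match m, hm with
  | 1, _ =>
    rw [dd_one, dd_zero]
    simp only [show i+1+1 = i+2 from by omega]
    rw [dd_rec b a i z]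
    ring
  | 2, _ =>
    have h2 := dd_rec b a (i+1) z
    simp only [show i+1+2 = i+3 from by omega, show i+1+1 = i+2 from by omega] at h2
    have hbs2 := dd_rec (fun k => b (i+1+k)) (fun k => a (i+1+k)) 0 z
    simp only [dd_one, dd_zero, show (0:ℕ)+2 = 2 from by omega, show (0:ℕ)+1 = 1 from by omega,
      show i+1+2 = i+3 from by omega, show i+1+1 = i+2 from by omega, mul_one] at hbs2
    have hbt1 : dd (fun k => b (i+2+k)) (fun k => a (i+2+k)) 1 z = b (i+3) - z := by
      simp only [dd_one, show i+2+1 = i+3 from by omega]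
    have h1 := dd_rec b a i z
    simp only [show (2:ℕ)-1 = 1 from rfl, show i+1+2 = i+3 from by omega] at *
    rw [h2, hbs2, hbt1, h1]
    ring
  | (k+3), _ =>
    have ih1 := ih (k+2) (by omega) (by omega)
    have ih0 := ih (k+1) (by omega) (by omega)
    have hrec := dd_rec b a (i+k+2) z
    have hbs := dd_rec (fun k => b (i+1+k)) (fun k => a (i+1+k)) (k+1) z
    have hbt := dd_rec (fun k => b (i+2+k)) (fun k => a (i+2+k)) k z
    simp only [show i+1+(k+3) = i+k+4 from by omega, show i+1+(k+2) = i+k+3 from by omega,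
      show i+1+(k+1) = i+k+2 from by omega, show i+k+2+2 = i+k+4 from by omega,
      show i+k+2+1 = i+k+3 from by omega, show k+1+2 = k+3 from by omega,
      show k+1+1 = k+2 from by omega, show k+2-1 = k+1 from by omega,
      show k+1-1 = k from by omega, show k+3-1 = k+2 from by omega,
      show i+1+(k+1+2) = i+k+4 from by omega, show i+1+(k+1+1) = i+k+3 from by omega,
      show i+2+(k+2) = i+k+4 from by omega, show i+2+(k+1) = i+k+3 from by omega] at *
    rw [hrec, ih1, ih0, hbs, hbt]
    ring

lemma adj_last (m : ℕ) (b a : ℕ → ℂ) (z : ℂ) :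
    (jacobiMatrix (m+1) b a - z • 1).adjugate (Fin.last m) (Fin.last m) = dd b a m z := by
  rw [Matrix.adjugate_fin_succ_eq_det_submatrix]
  have hs : ((-1 : ℂ)) ^ ((Fin.last m : ℕ) + (Fin.last m : ℕ)) = 1 := by
    simp [← two_mul, pow_mul]
  rw [hs, one_mul, Fin.succAbove_last, dd]
  congr 1
  ext i j
  rw [Matrix.submatrix_apply, Jz_apply, Jz_apply]
  simp

lemma adj_zero (m : ℕ) (b a : ℕ → ℂ) (z : ℂ) :
    (jacobiMatrix (m+1) b a - z • 1).adjugate 0 0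
      = dd (fun k => b (k+1)) (fun k => a (k+1)) m z := by
  rw [Matrix.adjugate_fin_succ_eq_det_submatrix]
  norm_num
  rw [dd]
  congr 1
  ext i j
  rw [Matrix.submatrix_apply]; rw [Jz_apply, Jz_apply]
  simp only [Fin.val_succ]
  rcases eq_or_ne (i : ℕ) (j : ℕ) with h | h
  · simp [h]
  · rw [if_neg (by omega), if_neg h]
    rcases eq_or_ne ((i : ℕ)+1) (j : ℕ) with h2 | h2
    · rw [if_pos (by omega), if_pos h2]
    · rw [if_neg (by omega), if_neg h2]
      rcases eq_or_ne ((j : ℕ)+1) (i : ℕ) with h3 | h3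
      · rw [if_pos (by omega), if_pos h3]
      · rw [if_neg (by omega), if_neg h3]

lemma resolvent_last' (m : ℕ) (hm : 0 < m) (b a : ℕ → ℂ) (z : ℂ) (idx : Fin m)
    (hidx : (idx : ℕ) = m - 1) :
    jacobiResolventEntry m b a idx z = dd b a (m-1) z / dd b a m z := by
  obtain ⟨m', rfl⟩ : ∃ m', m = m' + 1 := ⟨m - 1, by omega⟩
  have hidx' : idx = Fin.last m' := Fin.ext (by simp [hidx])
  rw [hidx', show m' + 1 - 1 = m' from rfl]
  rw [jacobiResolventEntry, Matrix.inv_def, Matrix.smul_apply, adj_last, Ring.inverse_eq_inv']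
  rw [smul_eq_mul, div_eq_mul_inv, mul_comm]
  rfl

lemma resolvent_zero' (m : ℕ) (hm : 0 < m) (b a : ℕ → ℂ) (z : ℂ) (idx : Fin m)
    (hidx : (idx : ℕ) = 0) :
    jacobiResolventEntry m b a idx z
      = dd (fun k => b (k+1)) (fun k => a (k+1)) (m-1) z / dd b a m z := by
  obtain ⟨m', rfl⟩ : ∃ m', m = m' + 1 := ⟨m - 1, by omega⟩
  have hidx' : idx = 0 := Fin.ext (by simp [hidx])
  rw [hidx', show m' + 1 - 1 = m' from rfl]
  rw [jacobiResolventEntry, Matrix.inv_def, Matrix.smul_apply, adj_zero, Ring.inverse_eq_inv']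
  rw [smul_eq_mul, div_eq_mul_inv, mul_comm]
  rfl

lemma dd_eq_eval (b a : ℕ → ℂ) (m : ℕ) (z : ℂ) :
    dd b a m z = (-1)^m * (jacobiMatrix m b a).charpoly.eval z := by
  rw [Matrix.charpoly, ← Polynomial.coe_evalRingHom, RingHom.map_det]
  have : (Matrix.charmatrix (jacobiMatrix m b a)).map (Polynomial.evalRingHom z)
      = z • 1 - jacobiMatrix m b a := by
    ext i j
    rcases eq_or_ne i j with h | h
    · subst h
      simp [Matrix.charmatrix_apply_eq]
    · simp [Matrix.charmatrix_apply_ne _ _ _ h, Matrix.one_apply_ne h]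
  rw [RingHom.mapMatrix_apply, this, dd]
  rw [show jacobiMatrix m b a - z • 1 = -(z • 1 - jacobiMatrix m b a) from by rw [neg_sub]]
  rw [Matrix.det_neg]
  simp

lemma dd_analytic (b a : ℕ → ℂ) (m : ℕ) (z : ℂ) : AnalyticAt ℂ (dd b a m) z := by
  have : dd b a m = fun w => (-1)^m * (jacobiMatrix m b a).charpoly.eval w := by
    funext w; exact dd_eq_eval b a m w
  rw [this]
  have h := (analyticAt_id (𝕜 := ℂ) (z := z)).aeval_polynomial (jacobiMatrix m b a).charpoly
  have h2 : AnalyticAt ℂ (fun x => (jacobiMatrix m b a).charpoly.eval x) z := by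
    simpa [Polynomial.aeval_def, Polynomial.eval_map] using h
  exact (analyticAt_const (v := ((-1:ℂ))^m)).mul h2

lemma dd_continuousAt (b a : ℕ → ℂ) (m : ℕ) (z : ℂ) : ContinuousAt (dd b a m) z :=
  (dd_analytic b a m z).continuousAt

lemma jac_split (m : ℕ) (β : ℕ → ℂ) (α : ℕ → ℝ) :
    jacobiMatrix m β (fun k => (α k : ℂ))
      = jacobiMatrix m (fun k => ((β k).re : ℂ)) (fun k => (α k : ℂ))
        + Matrix.diagonal (fun i : Fin m => (((β ((i:ℕ)+1)).im : ℂ) * Complex.I)) := by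
  ext i j
  rcases eq_or_ne i j with h | h
  · subst h
    simp [jacobiMatrix, Matrix.diagonal_apply_eq, Complex.re_add_im]
  · have h' : (i : ℕ) ≠ (j : ℕ) := fun hh => h (Fin.ext hh)
    simp [jacobiMatrix, Matrix.diagonal_apply_ne _ h, h']

lemma jac_re_hermitian (m : ℕ) (β : ℕ → ℂ) (α : ℕ → ℝ) :
    (jacobiMatrix m (fun k => ((β k).re : ℂ)) (fun k => (α k : ℂ))).IsHermitian := by
  ext i j
  rw [Matrix.conjTranspose_apply]
  show starRingEnd ℂ (jacobiMatrix m _ _ j i) = _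
  rcases eq_or_ne (i : ℕ) (j : ℕ) with h | h
  · have : i = j := Fin.ext h
    subst this
    simp [jacobiMatrix]
  · simp only [jacobiMatrix, Matrix.of_apply, if_neg h, if_neg (Ne.symm h)]
    rcases eq_or_ne ((i : ℕ)+1) (j : ℕ) with h2 | h2
    · simp [h2, if_neg (show (j:ℕ) + 1 ≠ (i:ℕ) from by omega)]
    · rcases eq_or_ne ((j : ℕ)+1) (i : ℕ) with h3 | h3
      · simp [h3, if_neg (show (i:ℕ) + 1 ≠ (j:ℕ) from by omega)]
      · simp [if_neg h2, if_neg h3]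

lemma im_form (m : ℕ) (β : ℕ → ℂ) (α : ℕ → ℝ) (v : Fin m → ℂ) :
    ((star v) ⬝ᵥ ((jacobiMatrix m β (fun k => (α k : ℂ))) *ᵥ v)).im
      = ∑ i : Fin m, (β ((i:ℕ)+1)).im * Complex.normSq (v i) := by
  set R := jacobiMatrix m (fun k => ((β k).re : ℂ)) (fun k => (α k : ℂ)) with hR
  rw [jac_split m β α, Matrix.add_mulVec, dotProduct_add, Complex.add_im]
  have h1 : ((star v) ⬝ᵥ (R *ᵥ v)).im = 0 := by
    rw [← Complex.conj_eq_iff_im]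
    have e1 : star v ⬝ᵥ (R *ᵥ v) = star (star (R *ᵥ v) ⬝ᵥ v) := Matrix.star_dotProduct _ _
    show star _ = _
    nth_rewrite 1 [e1]
    rw [star_star, Matrix.star_mulVec, (jac_re_hermitian m β α), ← Matrix.dotProduct_mulVec, e1]
  rw [h1, zero_add]
  have h2 : (star v) ⬝ᵥ (Matrix.diagonal (fun i : Fin m => (((β ((i:ℕ)+1)).im : ℂ) * Complex.I)) *ᵥ v)
      = ∑ i : Fin m, (((β ((i:ℕ)+1)).im : ℂ) * Complex.I) * (star (v i) * v i) := by
    rw [dotProduct]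
    refine Finset.sum_congr rfl fun i _ => ?_
    rw [Matrix.mulVec_diagonal]
    simp only [Pi.star_apply]
    ring
  rw [h2, Complex.im_sum]
  congr 1
  funext i
  have : star (v i) * v i = (Complex.normSq (v i) : ℂ) := by
    rw [mul_comm]
    exact Complex.mul_conj (v i)
  rw [this]
  simp

lemma eigen_im (m : ℕ) (β : ℕ → ℂ) (α : ℕ → ℝ) (z : ℂ) (v : Fin m → ℂ)
    (h : (jacobiMatrix m β (fun k => (α k : ℂ)) - z • 1) *ᵥ v = 0) :
    z.im * (∑ i : Fin m, Complex.normSq (v i))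
      = ∑ i : Fin m, (β ((i:ℕ)+1)).im * Complex.normSq (v i) := by
  have hmv : (jacobiMatrix m β (fun k => (α k : ℂ))) *ᵥ v = z • v := by
    have h' := h
    rw [Matrix.sub_mulVec, Matrix.smul_mulVec, Matrix.one_mulVec, sub_eq_zero] at h'
    exact h'
  have him := im_form m β α v
  rw [hmv] at him
  rw [← him]
  have : (star v) ⬝ᵥ (z • v) = z * ((∑ i : Fin m, Complex.normSq (v i) : ℝ) : ℂ) := by
    rw [dotProduct_smul, smul_eq_mul]
    congr 1
    rw [dotProduct]
    push_cast
    refine Finset.sum_congr rfl fun i _ => ?_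
    simp only [Pi.star_apply, RCLike.star_def]
    rw [mul_comm]
    exact Complex.mul_conj (v i)
  rw [this]
  simp

lemma sum_normSq_pos (m : ℕ) (v : Fin m → ℂ) (hv : v ≠ 0) :
    0 < ∑ i : Fin m, Complex.normSq (v i) := by
  obtain ⟨i, hi⟩ : ∃ i, v i ≠ 0 := by
    by_contra hc
    push_neg at hc
    exact hv (funext hc)
  exact Finset.sum_pos' (fun i _ => Complex.normSq_nonneg _)
    ⟨i, Finset.mem_univ i, Complex.normSq_pos.mpr hi⟩

lemma real_no_complex (m : ℕ) (β : ℕ → ℂ) (α : ℕ → ℝ)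
    (hβ : ∀ k, 1 ≤ k → k ≤ m → (β k).im = 0) (z : ℂ) (hz : z.im ≠ 0) :
    dd β (fun k => (α k : ℂ)) m z ≠ 0 := by
  intro hdet
  obtain ⟨v, hv, hveq⟩ := (Matrix.exists_mulVec_eq_zero_iff).mpr hdet
  have h := eigen_im m β α z v hveq
  have hzero : ∑ i : Fin m, (β ((i:ℕ)+1)).im * Complex.normSq (v i) = 0 := by
    apply Finset.sum_eq_zero
    intro i _
    rw [hβ ((i:ℕ)+1) (by omega) (by omega)]
    ring
  rw [hzero] at h
  have := sum_normSq_pos m v hv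
  rcases mul_eq_zero.mp h with h' | h'
  · exact hz h'
  · linarith

lemma descend (b a : ℕ → ℂ) (z : ℂ) : ∀ k, (∀ i, 1 ≤ i → i ≤ k → a i ≠ 0) →
    dd b a (k+1) z = 0 → dd b a k z = 0 → False := by
  intro k
  induction k with
  | zero =>
    intro _ _ h2
    rw [dd_zero] at h2
    exact one_ne_zero h2
  | succ k ih =>
    intro hA h1 h2
    have hrec := dd_rec b a k z
    rw [show k+2 = k+1+1 from by omega] at hrec
    rw [h1, h2, mul_zero, zero_sub, eq_comm, neg_eq_zero, mul_eq_zero] at hrec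
    rcases hrec with h' | h'
    · exact hA (k+1) (by omega) (le_refl _) (pow_eq_zero_iff (by omega) |>.mp h')
    · exact ih (fun i hi1 hi2 => hA i hi1 (by omega)) h2 h'

lemma propagate (m : ℕ) (β : ℕ → ℂ) (α : ℕ → ℝ)
    (hα : ∀ k, 1 ≤ k → k ≤ m - 1 → (α k : ℝ) ≠ 0) (z : ℂ) (v : Fin m → ℂ)
    (h : (jacobiMatrix m β (fun k => (α k : ℂ)) - z • 1) *ᵥ v = 0)
    (hm : 0 < m) (h0 : v ⟨0, hm⟩ = 0) : v = 0 := by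
  have key : ∀ k, ∀ (hk : k < m), v ⟨k, hk⟩ = 0 := by
    intro k
    induction k using Nat.strong_induction_on with
    | _ k ih =>
      intro hk
      match k, hk with
      | 0, _ => exact h0
      | (k+1), hk =>
        have hrow := congrFun h ⟨k, by omega⟩
        simp only [Matrix.mulVec, dotProduct, Pi.zero_apply] at hrow
        rw [Finset.sum_eq_single_of_mem (⟨k+1, hk⟩ : Fin m) (Finset.mem_univ _)] at hrow
        · rw [Jz_apply] at hrow
          simp only [] at hrow
          rw [if_neg (by first | (simp only [Fin.val_mk]; omega) | omega),
            if_pos (by first | (simp only [Fin.val_mk]) | rfl)] at hrow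
          have : ((α (k+1) : ℂ)) ≠ 0 := by
            simpa using hα (k+1) (by omega) (by omega)
          have := (mul_eq_zero.mp hrow).resolve_left this
          simpa using this
        · intro j _ hj
          rcases Nat.lt_or_ge (j : ℕ) (k+1) with hlt | hge
          · have hvj : v j = 0 := by
              have := ih (j : ℕ) (by omega) (by omega)
              simpa [Fin.eta] using this
            rw [hvj, mul_zero]
          · have hj2 : (k : ℕ)+2 ≤ (j : ℕ) := by
              rcases Nat.lt_or_ge (k+1) (j : ℕ) with h' | h'
              · omega
              · exfalso
                exact hj (Fin.ext (by first | (simp only [Fin.val_mk]; omega) | omega))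
            rw [Jz_apply]
            simp only []
            rw [if_neg (by first | (simp only [Fin.val_mk]; omega) | omega),
              if_neg (by first | (simp only [Fin.val_mk]; omega) | omega),
              if_neg (by first | (simp only [Fin.val_mk]; omega) | omega), zero_mul]
  funext i
  have := key (i : ℕ) i.isLt
  simpa [Fin.eta] using this

lemma dissip_im_ne (n : ℕ) (b : ℕ → ℂ) (a : ℕ → ℝ)
    (hb1 : 0 < (b 1).im) (hbreal : ∀ k, 2 ≤ k → k ≤ n → (b k).im = 0)
    (ha : ∀ k, 1 ≤ k → k ≤ n - 1 → 0 < a k) (hn : 0 < n) (z : ℂ)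
    (hdet : dd b (fun k => (a k : ℂ)) n z = 0) : z.im ≠ 0 := by
  intro hz
  obtain ⟨v, hv, hveq⟩ := (Matrix.exists_mulVec_eq_zero_iff).mpr hdet
  have h := eigen_im n b a z v hveq
  rw [hz, zero_mul, eq_comm] at h
  have hsum : ∑ i : Fin n, (b ((i:ℕ)+1)).im * Complex.normSq (v i)
      = (b 1).im * Complex.normSq (v ⟨0, hn⟩) := by
    rw [Finset.sum_eq_single_of_mem (⟨0, hn⟩ : Fin n) (Finset.mem_univ _)]
    intro j _ hj
    have : (j : ℕ) ≠ 0 := fun hc => hj (Fin.ext hc)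
    rw [hbreal ((j:ℕ)+1) (by omega) (by omega), zero_mul]
  rw [hsum] at h
  have hv0 : v ⟨0, hn⟩ = 0 := by
    rcases mul_eq_zero.mp h with h' | h'
    · linarith
    · exact Complex.normSq_eq_zero.mp h'
  exact hv (propagate n b a (fun k h1 h2 => ne_of_gt (ha k h1 h2)) z v hveq hn hv0)

lemma aderiv {f : ℂ → ℂ} {x : ℂ} (hf : AnalyticAt ℂ f x) : AnalyticAt ℂ (deriv f) x := by
  obtain ⟨s, hs, hf2⟩ := hf.eventually_analyticAt.exists_mem
  exact (AnalyticOnNhd.deriv hf2) x (mem_of_mem_nhds hs)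

lemma iter_add (p : ℕ) : ∀ (f g : ℂ → ℂ) (x : ℂ), AnalyticAt ℂ f x → AnalyticAt ℂ g x →
    iteratedDeriv p (fun z => f z + g z) x = iteratedDeriv p f x + iteratedDeriv p g x := by
  induction p with
  | zero => intro f g x _ _; simp [iteratedDeriv_zero]
  | succ p ih =>
    intro f g x hf hg
    rw [iteratedDeriv_succ', iteratedDeriv_succ', iteratedDeriv_succ']
    have hev : deriv (fun z => f z + g z) =ᶠ[nhds x] fun z => deriv f z + deriv g z := by
      filter_upwards [hf.eventually_analyticAt, hg.eventually_analyticAt] with w hfw hgw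
      exact deriv_add hfw.differentiableAt hgw.differentiableAt
    rw [Filter.EventuallyEq.iteratedDeriv_eq p hev]
    exact ih _ _ x (aderiv hf) (aderiv hg)

lemma iter_cmul (p : ℕ) : ∀ (c : ℂ) (f : ℂ → ℂ) (x : ℂ), AnalyticAt ℂ f x →
    iteratedDeriv p (fun z => c * f z) x = c * iteratedDeriv p f x := by
  induction p with
  | zero => intro c f x _; simp [iteratedDeriv_zero]
  | succ p ih =>
    intro c f x hf
    rw [iteratedDeriv_succ', iteratedDeriv_succ']
    have hev : deriv (fun z => c * f z) =ᶠ[nhds x] fun z => c * deriv f z := by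
      filter_upwards [hf.eventually_analyticAt] with w hfw
      exact deriv_const_mul c hfw.differentiableAt
    rw [Filter.EventuallyEq.iteratedDeriv_eq p hev]
    exact ih _ _ x (aderiv hf)

lemma iter_vanish (p : ℕ) : ∀ (l : ℕ) (g : ℂ → ℂ) (x : ℂ), AnalyticAt ℂ g x → p < l →
    iteratedDeriv p (fun z => (z - x)^l * g z) x = 0 := by
  induction p with
  | zero =>
    intro l g x _ hp
    rw [iteratedDeriv_zero]
    simp [zero_pow (by omega : l ≠ 0)]
  | succ p ih =>
    intro l g x hg hp
    obtain ⟨l', rfl⟩ : ∃ l', l = l' + 1 := ⟨l - 1, by omega⟩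
    rw [iteratedDeriv_succ']
    have hev : deriv (fun z => (z - x)^(l'+1) * g z) =ᶠ[nhds x]
        (fun z => (z - x)^(l') * (((l':ℂ)+1) * g z + (z - x) * deriv g z)) := by
      filter_upwards [hg.eventually_analyticAt] with w hgw
      have hd : HasDerivAt (fun z : ℂ => (z - x)^(l'+1))
          ((((l':ℂ)+1)) * (w - x)^l' * 1) w := by
        have := ((hasDerivAt_id w).sub_const x).pow (l'+1)
        simpa [Pi.pow_def] using this
      rw [deriv_fun_mul (hd.differentiableAt) hgw.differentiableAt, hd.deriv]
      ring
    rw [Filter.EventuallyEq.iteratedDeriv_eq p hev]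
    refine ih l' _ x ?_ (by omega)
    exact ((analyticAt_const.mul hg).add
      (((analyticAt_id).sub analyticAt_const).mul (aderiv hg)))

end JacobiAux

open JacobiAux in
/-- **Matching of `m₋`- and `m₊`-functions at a non-real eigenvalue.**
If `z₀` is an eigenvalue of `J` of algebraic multiplicity `l`, then for every
`j = 1, …, n-1`: `J_{[1,j]} - z₀` is invertible, the derivatives of `1/m₋(·, j+1)` and
`aⱼ² m₊(·, j)` agree at `z₀` up to order `l-1` (in particular
`1/m₋(z₀, j+1) = aⱼ² m₊(z₀, j)`), and `z₀` is a zero of order `l` of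
`1/m₋(·, j+1) - aⱼ² m₊(·, j)`. -/
theorem dissipative_jacobi_m_functions_at_eigenvalue
    (n : ℕ) (b : ℕ → ℂ) (a : ℕ → ℝ)
    (hb1 : 0 < (b 1).im) (hbreal : ∀ k, 2 ≤ k → k ≤ n → (b k).im = 0)
    (ha : ∀ k, 1 ≤ k → k ≤ n - 1 → 0 < a k)
    (z₀ : ℂ) (l : ℕ) (hl : 1 ≤ l)
    (hmult : (jacobiMatrix n b (fun k => (a k : ℂ))).charpoly.rootMultiplicity z₀ = l)
    (j : ℕ) (hj1 : 1 ≤ j) (hjn : j < n) :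
    IsUnit (jacobiMatrix j b (fun k => (a k : ℂ)) - z₀ • 1) ∧
    (∀ p, p < l →
      iteratedDeriv p
          (fun z => 1 / jacobiResolventEntry j b (fun k => (a k : ℂ)) ⟨j - 1, by omega⟩ z) z₀
        = (a j : ℂ) ^ 2 *
          iteratedDeriv p
            (fun z => jacobiResolventEntry (n - j) (fun k => b (k + j))
              (fun k => (a (k + j) : ℂ)) ⟨0, by omega⟩ z) z₀) ∧
    (∃ g : ℂ → ℂ, AnalyticAt ℂ g z₀ ∧ g z₀ ≠ 0 ∧
      ∀ᶠ z in nhds z₀,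
        1 / jacobiResolventEntry j b (fun k => (a k : ℂ)) ⟨j - 1, by omega⟩ z
          - (a j : ℂ) ^ 2 * jacobiResolventEntry (n - j) (fun k => b (k + j))
              (fun k => (a (k + j) : ℂ)) ⟨0, by omega⟩ z
        = (z - z₀) ^ l * g z) := by
  classical
  -- polynomial factorization
  set P : Polynomial ℂ := (jacobiMatrix n b (fun k => (a k : ℂ))).charpoly with hPdef
  set q : Polynomial ℂ := P /ₘ (Polynomial.X - Polynomial.C z₀)^l with hqdef
  have hPne : P ≠ 0 := (Matrix.charpoly_monic _).ne_zero
  have hfact : (Polynomial.X - Polynomial.C z₀)^l * q = P := by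
    rw [hqdef, ← hmult]
    exact Polynomial.pow_mul_divByMonic_rootMultiplicity_eq _ z₀
  have hq0 : q.eval z₀ ≠ 0 := by
    rw [hqdef, ← hmult]
    exact Polynomial.eval_divByMonic_pow_rootMultiplicity_ne_zero z₀ hPne
  have hPeval : ∀ w, P.eval w = (w - z₀)^l * q.eval w := by
    intro w
    rw [← hfact]
    simp
  have hdn0 : dd b (fun k => (a k : ℂ)) n z₀ = 0 := by
    rw [dd_eq_eval, ← hPdef, hPeval]
    simp [zero_pow (show l ≠ 0 by omega)]
  have him : z₀.im ≠ 0 := dissip_im_ne n b a hb1 hbreal ha (by omega) z₀ hdn0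
  -- splitting identity
  have hsplitn : ∀ w, dd b (fun k => (a k : ℂ)) n w
      = dd b (fun k => (a k : ℂ)) j w
          * dd (fun k => b (k + j)) (fun k => ((a (k + j) : ℂ))) (n - j) w
        - ((a j : ℂ))^2 * dd b (fun k => (a k : ℂ)) (j-1) w *
          dd (fun k => b (k + 1 + j)) (fun k => ((a (k + 1 + j) : ℂ))) (n - j - 1) w := by
    intro w
    have h := dd_split b (fun k => (a k : ℂ)) (j-1) w (n - j) (by omega)
    rw [show j - 1 + 1 + (n - j) = n from by omega] at h
    rw [show j - 1 + 1 = j from by omega] at h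
    rw [show j - 1 + 2 = j + 1 from by omega] at h
    have e1 : (fun k => b (j + k)) = (fun k => b (k + j)) :=
      funext fun k => congrArg b (by omega)
    have e2 : (fun k => ((a (j + k) : ℂ))) = (fun k => ((a (k + j) : ℂ))) :=
      funext fun k => congrArg (fun t => ((a t : ℂ))) (by omega)
    have e3 : (fun k => b (j + 1 + k)) = (fun k => b (k + 1 + j)) :=
      funext fun k => congrArg b (by omega)
    have e4 : (fun k => ((a (j + 1 + k) : ℂ))) = (fun k => ((a (k + 1 + j) : ℂ))) :=
      funext fun k => congrArg (fun t => ((a t : ℂ))) (by omega)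
    rw [e1, e2, e3, e4] at h
    exact h
  -- nonvanishing at z₀
  have he : dd (fun k => b (k + j)) (fun k => ((a (k + j) : ℂ))) (n - j) z₀ ≠ 0 := by
    apply real_no_complex (n - j) (fun k => b (k + j)) (fun k => a (k + j)) ?_ z₀ him
    intro k hk1 hk2
    exact hbreal (k + j) (by omega) (by omega)
  have he' : dd (fun k => b (k + 1 + j)) (fun k => ((a (k + 1 + j) : ℂ))) (n - j - 1) z₀ ≠ 0 := by
    rcases Nat.eq_zero_or_pos (n - j - 1) with h0 | hpos
    · rw [h0, dd_zero]; exact one_ne_zero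
    · apply real_no_complex (n - j - 1) (fun k => b (k + 1 + j)) (fun k => a (k + 1 + j)) ?_ z₀ him
      intro k hk1 hk2
      exact hbreal (k + 1 + j) (by omega) (by omega)
  have haj : ((a j : ℂ)) ≠ 0 := by
    have := ne_of_gt (ha j hj1 (by omega))
    simpa using this
  have hacast : ∀ i, 1 ≤ i → i ≤ j - 1 → ((a i : ℂ)) ≠ 0 := by
    intro i h1 h2
    have := ne_of_gt (ha i h1 (by omega))
    simpa using this
  have hdj : dd b (fun k => (a k : ℂ)) j z₀ ≠ 0 := by
    intro hzero
    have hs := hsplitn z₀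
    rw [hdn0, hzero] at hs
    have hprod : ((a j : ℂ))^2 * dd b (fun k => (a k : ℂ)) (j-1) z₀ *
        dd (fun k => b (k + 1 + j)) (fun k => ((a (k + 1 + j) : ℂ))) (n - j - 1) z₀ = 0 := by
      linear_combination hs
    have hdjm0 : dd b (fun k => (a k : ℂ)) (j-1) z₀ = 0 := by
      rcases mul_eq_zero.mp hprod with h | h
      · rcases mul_eq_zero.mp h with h | h
        · exact absurd (pow_eq_zero_iff (by omega) |>.mp h) haj
        · exact h
      · exact absurd h he'
    refine descend b (fun k => (a k : ℂ)) z₀ (j-1) hacast ?_ hdjm0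
    rw [show j - 1 + 1 = j from by omega]
    exact hzero
  have hdjm : dd b (fun k => (a k : ℂ)) (j-1) z₀ ≠ 0 := by
    intro hzero
    have hs := hsplitn z₀
    rw [hdn0, hzero] at hs
    have hprod : dd b (fun k => (a k : ℂ)) j z₀ *
        dd (fun k => b (k + j)) (fun k => ((a (k + j) : ℂ))) (n - j) z₀ = 0 := by
      linear_combination -hs
    rcases mul_eq_zero.mp hprod with h | h
    · exact hdj h
    · exact he h
  -- bullet 1
  have bullet1 : IsUnit (jacobiMatrix j b (fun k => (a k : ℂ)) - z₀ • 1) := by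
    rw [Matrix.isUnit_iff_isUnit_det]
    exact isUnit_iff_ne_zero.mpr hdj
  -- pointwise resolvent formulas
  have hjpf : j - 1 < j := by omega
  have h0pf : 0 < n - j := by omega
  have hf1 : ∀ w, 1 / jacobiResolventEntry j b (fun k => (a k : ℂ)) ⟨j - 1, hjpf⟩ w
      = dd b (fun k => (a k : ℂ)) j w / dd b (fun k => (a k : ℂ)) (j-1) w := by
    intro w
    rw [resolvent_last' j (by omega) b (fun k => (a k : ℂ)) w ⟨j - 1, hjpf⟩ rfl, one_div, inv_div]
  have hf2 : ∀ w, jacobiResolventEntry (n - j) (fun k => b (k + j))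
        (fun k => ((a (k + j) : ℂ))) ⟨0, h0pf⟩ w
      = dd (fun k => b (k + 1 + j)) (fun k => ((a (k + 1 + j) : ℂ))) (n - j - 1) w
          / dd (fun k => b (k + j)) (fun k => ((a (k + j) : ℂ))) (n - j) w := by
    intro w
    rw [resolvent_zero' (n - j) h0pf (fun k => b (k + j)) (fun k => ((a (k + j) : ℂ))) w
      ⟨0, h0pf⟩ rfl]
  -- analyticity of the rational pieces
  have hr1 : AnalyticAt ℂ (fun w => dd b (fun k => (a k : ℂ)) j w
      / dd b (fun k => (a k : ℂ)) (j-1) w) z₀ :=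
    (dd_analytic _ _ _ _).div (dd_analytic _ _ _ _) hdjm
  have hr2 : AnalyticAt ℂ (fun w =>
      dd (fun k => b (k + 1 + j)) (fun k => ((a (k + 1 + j) : ℂ))) (n - j - 1) w
        / dd (fun k => b (k + j)) (fun k => ((a (k + j) : ℂ))) (n - j) w) z₀ :=
    (dd_analytic _ _ _ _).div (dd_analytic _ _ _ _) he
  -- the analytic unit g
  set g : ℂ → ℂ := fun w => (-1)^n * q.eval w /
      (dd b (fun k => (a k : ℂ)) (j-1) w *
        dd (fun k => b (k + j)) (fun k => ((a (k + j) : ℂ))) (n - j) w) with hgdef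
  have hqanalytic : AnalyticAt ℂ (fun w => q.eval w) z₀ := by
    have h := (analyticAt_id (𝕜 := ℂ) (z := z₀)).aeval_polynomial q
    simpa [Polynomial.aeval_def, Polynomial.eval_map] using h
  have hganalytic : AnalyticAt ℂ g z₀ := by
    exact ((analyticAt_const (v := ((-1:ℂ))^n)).mul hqanalytic).div
      ((dd_analytic _ _ _ _).mul (dd_analytic _ _ _ _)) (mul_ne_zero hdjm he)
  have hgne : g z₀ ≠ 0 := by
    rw [hgdef]
    exact div_ne_zero (mul_ne_zero (pow_ne_zero _ (by norm_num)) hq0) (mul_ne_zero hdjm he)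
  -- key eventual identity
  have hkey : ∀ᶠ w in nhds z₀,
      dd b (fun k => (a k : ℂ)) j w / dd b (fun k => (a k : ℂ)) (j-1) w
        - ((a j : ℂ))^2 *
          (dd (fun k => b (k + 1 + j)) (fun k => ((a (k + 1 + j) : ℂ))) (n - j - 1) w
            / dd (fun k => b (k + j)) (fun k => ((a (k + j) : ℂ))) (n - j) w)
      = (w - z₀)^l * g w := by
    have hev1 := (dd_continuousAt b (fun k => (a k : ℂ)) (j-1) z₀).eventually_ne hdjm
    have hev2 := (dd_continuousAt (fun k => b (k + j)) (fun k => ((a (k + j) : ℂ)))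
      (n - j) z₀).eventually_ne he
    filter_upwards [hev1, hev2] with w h1 h2
    have hnum : dd b (fun k => (a k : ℂ)) j w
          * dd (fun k => b (k + j)) (fun k => ((a (k + j) : ℂ))) (n - j) w
        - ((a j : ℂ))^2 * dd b (fun k => (a k : ℂ)) (j-1) w *
          dd (fun k => b (k + 1 + j)) (fun k => ((a (k + 1 + j) : ℂ))) (n - j - 1) w
        = (w - z₀)^l * ((-1)^n * q.eval w) := by
      rw [← hsplitn w, dd_eq_eval, ← hPdef, hPeval]
      ring
    simp only [hgdef]
    rw [show ((a j : ℂ))^2 *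
        (dd (fun k => b (k + 1 + j)) (fun k => ((a (k + 1 + j) : ℂ))) (n - j - 1) w
          / dd (fun k => b (k + j)) (fun k => ((a (k + j) : ℂ))) (n - j) w)
        = ((a j : ℂ))^2 *
            dd (fun k => b (k + 1 + j)) (fun k => ((a (k + 1 + j) : ℂ))) (n - j - 1) w
          / dd (fun k => b (k + j)) (fun k => ((a (k + j) : ℂ))) (n - j) w from
      (mul_div_assoc _ _ _).symm]
    rw [div_sub_div _ _ h1 h2]
    rw [show (w - z₀)^l * ((-1)^n * Polynomial.eval w q /
        (dd b (fun k => (a k : ℂ)) (j-1) w *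
          dd (fun k => b (k + j)) (fun k => ((a (k + j) : ℂ))) (n - j) w))
        = (w - z₀)^l * ((-1)^n * Polynomial.eval w q) /
        (dd b (fun k => (a k : ℂ)) (j-1) w *
          dd (fun k => b (k + j)) (fun k => ((a (k + j) : ℂ))) (n - j) w) from
      (mul_div_assoc _ _ _).symm]
    congr 1
    linear_combination hnum
  -- bullets 2 and 3 with our own proof terms
  have bullet3 : ∃ g : ℂ → ℂ, AnalyticAt ℂ g z₀ ∧ g z₀ ≠ 0 ∧
      ∀ᶠ z in nhds z₀,
        1 / jacobiResolventEntry j b (fun k => (a k : ℂ)) ⟨j - 1, hjpf⟩ z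
          - (a j : ℂ) ^ 2 * jacobiResolventEntry (n - j) (fun k => b (k + j))
              (fun k => (a (k + j) : ℂ)) ⟨0, h0pf⟩ z
        = (z - z₀) ^ l * g z := by
    refine ⟨g, hganalytic, hgne, ?_⟩
    filter_upwards [hkey] with w hw
    rw [hf1 w, hf2 w]
    exact hw
  have bullet2 : ∀ p, p < l →
      iteratedDeriv p
          (fun z => 1 / jacobiResolventEntry j b (fun k => (a k : ℂ)) ⟨j - 1, hjpf⟩ z) z₀
        = (a j : ℂ) ^ 2 *
          iteratedDeriv p
            (fun z => jacobiResolventEntry (n - j) (fun k => b (k + j))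
              (fun k => (a (k + j) : ℂ)) ⟨0, h0pf⟩ z) z₀ := by
    intro p hp
    have hfe1 : (fun z => 1 / jacobiResolventEntry j b (fun k => (a k : ℂ)) ⟨j - 1, hjpf⟩ z)
        = (fun w => dd b (fun k => (a k : ℂ)) j w / dd b (fun k => (a k : ℂ)) (j-1) w) :=
      funext hf1
    have hfe2 : (fun z => jacobiResolventEntry (n - j) (fun k => b (k + j))
          (fun k => (a (k + j) : ℂ)) ⟨0, h0pf⟩ z)
        = (fun w => dd (fun k => b (k + 1 + j)) (fun k => ((a (k + 1 + j) : ℂ))) (n - j - 1) w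
            / dd (fun k => b (k + j)) (fun k => ((a (k + j) : ℂ))) (n - j) w) :=
      funext hf2
    rw [hfe1, hfe2]
    have hsum : iteratedDeriv p (fun z =>
        dd b (fun k => (a k : ℂ)) j z / dd b (fun k => (a k : ℂ)) (j-1) z
          + -((a j : ℂ)^2) *
            (dd (fun k => b (k + 1 + j)) (fun k => ((a (k + 1 + j) : ℂ))) (n - j - 1) z
              / dd (fun k => b (k + j)) (fun k => ((a (k + j) : ℂ))) (n - j) z)) z₀ = 0 := by
      have hev : (fun z =>
          dd b (fun k => (a k : ℂ)) j z / dd b (fun k => (a k : ℂ)) (j-1) z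
            + -((a j : ℂ)^2) *
              (dd (fun k => b (k + 1 + j)) (fun k => ((a (k + 1 + j) : ℂ))) (n - j - 1) z
                / dd (fun k => b (k + j)) (fun k => ((a (k + j) : ℂ))) (n - j) z))
          =ᶠ[nhds z₀] (fun z => (z - z₀)^l * g z) := by
        filter_upwards [hkey] with w hw
        linear_combination hw
      rw [Filter.EventuallyEq.iteratedDeriv_eq p hev]
      exact iter_vanish p l g z₀ hganalytic hp
    have hadd := iter_add p
      (fun w => dd b (fun k => (a k : ℂ)) j w / dd b (fun k => (a k : ℂ)) (j-1) w)
      (fun z => -((a j : ℂ)^2) *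
        (dd (fun k => b (k + 1 + j)) (fun k => ((a (k + 1 + j) : ℂ))) (n - j - 1) z
          / dd (fun k => b (k + j)) (fun k => ((a (k + j) : ℂ))) (n - j) z)) z₀ hr1
      (analyticAt_const.mul hr2)
    have hc := iter_cmul p (-((a j : ℂ)^2))
      (fun w => dd (fun k => b (k + 1 + j)) (fun k => ((a (k + 1 + j) : ℂ))) (n - j - 1) w
        / dd (fun k => b (k + j)) (fun k => ((a (k + j) : ℂ))) (n - j) w) z₀ hr2
    have hfin : iteratedDeriv p
        (fun w => dd b (fun k => (a k : ℂ)) j w / dd b (fun k => (a k : ℂ)) (j-1) w) z₀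
        + -((a j : ℂ)^2) * iteratedDeriv p
          (fun w => dd (fun k => b (k + 1 + j)) (fun k => ((a (k + 1 + j) : ℂ))) (n - j - 1) w
            / dd (fun k => b (k + j)) (fun k => ((a (k + j) : ℂ))) (n - j) w) z₀ = 0 := by
      rw [← hc, ← hadd]
      exact hsum
    linear_combination hfin
  exact ⟨bullet1, bullet2, bullet3⟩
end

section
/- Let J be an n×n Jacobi matrix with Im b_1 > 0, b_k real for k ≥ 2, a_k > 0 for all k. Then for every j = 1,..., n-1, the matrices J_{[1,j]} and J have no common eigenvalues. -/
/-- embed a `Fin m` vector into ℕ, 1-based, zero outside `[1, m]`. -/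
def jembed (m : ℕ) (x : Fin m → ℂ) (k : ℕ) : ℂ :=
  if h : 1 ≤ k ∧ k ≤ m then x ⟨k - 1, by omega⟩ else 0

lemma jembed_eq (m : ℕ) (x : Fin m → ℂ) (i : Fin m) : jembed m x ((i : ℕ) + 1) = x i := by
  have h : 1 ≤ (i : ℕ) + 1 ∧ (i : ℕ) + 1 ≤ m := ⟨Nat.le_add_left 1 i, i.2⟩
  rw [jembed, dif_pos h]
  exact congrArg x (Fin.ext (by simp))

lemma jembed_zero_of (m : ℕ) (x : Fin m → ℂ) (k : ℕ) (h : k = 0 ∨ m < k) : jembed m x k = 0 := by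
  rw [jembed, dif_neg]; omega

lemma sum_if_nat (m : ℕ) (t : ℕ) (f : Fin m → ℂ) :
    ∑ l : Fin m, (if (l : ℕ) = t then f l else 0)
      = if h : t < m then f ⟨t, h⟩ else 0 := by
  split_ifs with h
  · rw [Finset.sum_eq_single (⟨t, h⟩ : Fin m)]
    · simp
    · intro l _ hl
      rw [if_neg]
      simpa [Fin.ext_iff] using hl
    · simp
  · apply Finset.sum_eq_zero
    intro l _
    rw [if_neg]
    have := l.2
    omega

/-- the fundamental three-term recurrence. -/
lemma jacobi_row (m : ℕ) (b a : ℕ → ℂ) (x : Fin m → ℂ) (z : ℂ)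
    (hx : (jacobiMatrix m b a).mulVec x = z • x) :
    ∀ k, 1 ≤ k → k ≤ m →
      a (k - 1) * jembed m x (k - 1) + b k * jembed m x k + a k * jembed m x (k + 1)
        = z * jembed m x k := by
  intro k hk1 hkm
  obtain ⟨i, hiv⟩ : ∃ i : Fin m, (i : ℕ) = k - 1 := ⟨⟨k - 1, by omega⟩, rfl⟩
  have hik : (i : ℕ) + 1 = k := by omega
  have hXk : jembed m x k = x i := by rw [← hik, jembed_eq]
  have hrow := congrFun hx i
  have hsplit : ∀ l : Fin m, (jacobiMatrix m b a) i l * x l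
      = (if (l : ℕ) = (i : ℕ) then b ((i : ℕ) + 1) * x l else 0)
        + (if (l : ℕ) = (i : ℕ) + 1 then a ((i : ℕ) + 1) * x l else 0)
        + (if (l : ℕ) = (i : ℕ) - 1 ∧ 1 ≤ (i : ℕ) then a (i : ℕ) * x l else 0) := by
    intro l
    have hl2 := l.2
    simp only [jacobiMatrix, Matrix.of_apply]
    rcases Nat.lt_trichotomy (l : ℕ) (i : ℕ) with h | h | h
    · rcases eq_or_lt_of_le (Nat.succ_le_of_lt h) with h2 | h2
      · rw [if_neg (by omega), if_neg (by omega), if_pos (by omega), if_neg (by omega),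
          if_neg (by omega), if_pos (by omega)]
        have : (l : ℕ) + 1 = (i : ℕ) := by omega
        rw [this]; ring
      · rw [if_neg (by omega), if_neg (by omega), if_neg (by omega), if_neg (by omega),
          if_neg (by omega), if_neg (by omega)]
        ring
    · rw [if_pos (by omega), if_pos (by omega), if_neg (by omega), if_neg (by omega)]
      ring
    · rcases eq_or_lt_of_le (Nat.succ_le_of_lt h) with h2 | h2
      · rw [if_neg (by omega), if_pos (by omega), if_neg (by omega), if_pos (by omega),
          if_neg (by omega)]
        ring
      · rw [if_neg (by omega), if_neg (by omega), if_neg (by omega), if_neg (by omega),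
          if_neg (by omega), if_neg (by omega)]
        ring
  have hs1 : ∑ l : Fin m, (if (l : ℕ) = (i : ℕ) then b ((i : ℕ) + 1) * x l else 0)
      = b k * jembed m x k := by
    rw [sum_if_nat, dif_pos i.2, hik, hXk]
  have hs2 : ∑ l : Fin m, (if (l : ℕ) = (i : ℕ) + 1 then a ((i : ℕ) + 1) * x l else 0)
      = a k * jembed m x (k + 1) := by
    rw [sum_if_nat, hik]
    split_ifs with h
    · exact congrArg (a k * ·) (jembed_eq m x ⟨k, h⟩).symm
    · rw [jembed_zero_of m x (k + 1) (by omega), mul_zero]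
  have hs3 : ∑ l : Fin m, (if (l : ℕ) = (i : ℕ) - 1 ∧ 1 ≤ (i : ℕ) then a (i : ℕ) * x l else 0)
      = a (k - 1) * jembed m x (k - 1) := by
    by_cases hk2 : 2 ≤ k
    · have : ∀ l : Fin m, ((l : ℕ) = (i : ℕ) - 1 ∧ 1 ≤ (i : ℕ)) ↔ (l : ℕ) = k - 2 := by
        intro l; omega
      calc ∑ l : Fin m, (if (l : ℕ) = (i : ℕ) - 1 ∧ 1 ≤ (i : ℕ) then a (i : ℕ) * x l else 0)
          = ∑ l : Fin m, (if (l : ℕ) = k - 2 then a (k - 1) * x l else 0) := by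
            refine Finset.sum_congr rfl fun l _ => ?_
            rw [hiv]
            by_cases hc : (l : ℕ) = k - 2
            · rw [if_pos (by omega), if_pos hc]
            · rw [if_neg (by omega), if_neg hc]
        _ = a (k - 1) * jembed m x (k - 1) := by
            rw [sum_if_nat, dif_pos (show k - 2 < m by omega)]
            have h2 : jembed m x (k - 1) = x ⟨k - 2, by omega⟩ := by
              rw [jembed, dif_pos (show 1 ≤ k - 1 ∧ k - 1 ≤ m by omega)]
              exact congrArg x (Fin.ext (by simp; omega))
            rw [h2]
    · rw [jembed_zero_of m x (k - 1) (by omega), mul_zero]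
      apply Finset.sum_eq_zero
      intro l _
      rw [if_neg (by omega)]
  have hmv : (jacobiMatrix m b a).mulVec x i
      = b k * jembed m x k + a k * jembed m x (k + 1) + a (k - 1) * jembed m x (k - 1) := by
    rw [Matrix.mulVec, dotProduct]
    rw [Finset.sum_congr rfl fun l _ => hsplit l, Finset.sum_add_distrib, Finset.sum_add_distrib,
      hs1, hs2, hs3]
  rw [hmv] at hrow
  rw [Pi.smul_apply, smul_eq_mul, ← hXk] at hrow
  linear_combination hrow


section
variable (X : ℕ → ℂ) (bC aC : ℕ → ℂ) (z : ℂ) (m : ℕ)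

lemma forward_zero
    (rec : ∀ k, 1 ≤ k → k ≤ m → aC (k-1) * X (k-1) + bC k * X k + aC k * X (k+1) = z * X k)
    (hout : ∀ k, m < k → X k = 0) (h0 : X 0 = 0)
    (hA : ∀ k, 1 ≤ k → k + 1 ≤ m → aC k ≠ 0)
    (h1 : X 1 = 0) : ∀ k, X k = 0 := by
  have key : ∀ k, X k = 0 ∧ X (k+1) = 0 := by
    intro k
    induction k with
    | zero => exact ⟨h0, h1⟩
    | succ k ih =>
      refine ⟨ih.2, ?_⟩
      by_cases hm : k + 2 ≤ m
      · have e := rec (k+1) (by omega) (by omega)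
        rw [Nat.add_sub_cancel, ih.1, ih.2] at e
        simp only [mul_zero, zero_add, add_zero, zero_mul] at e
        exact (mul_eq_zero.mp e).resolve_left (hA (k+1) (by omega) (by omega))
      · exact hout _ (by omega)
  exact fun k => (key k).1

lemma backward_zero (j : ℕ)
    (rec : ∀ k, 1 ≤ k → k ≤ m → aC (k-1) * X (k-1) + bC k * X k + aC k * X (k+1) = z * X k)
    (h0 : X 0 = 0)
    (hA : ∀ k, 1 ≤ k → k + 1 ≤ m → aC k ≠ 0)
    (hjm : j ≤ m) (hj : X j = 0) (hj1 : X (j+1) = 0) (hj0 : 1 ≤ j) : X 1 = 0 := by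
  have key : ∀ d, X (j - d) = 0 ∧ X (j - d + 1) = 0 := by
    intro d
    induction d with
    | zero => exact ⟨hj, hj1⟩
    | succ d ih =>
      by_cases h0' : j - d = 0
      · refine ⟨?_, ?_⟩
        · rw [show j - (d+1) = 0 by omega]; exact h0
        · rw [show j - (d+1) + 1 = j - d + 1 by omega]; exact ih.2
      · refine ⟨?_, by rw [show j - (d+1) + 1 = j - d by omega]; exact ih.1⟩
        have e := rec (j - d) (by omega) (by omega)
        rw [ih.1, ih.2] at e
        simp only [mul_zero, zero_add, add_zero, zero_mul] at e
        rw [show j - (d+1) = j - d - 1 by omega]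
        by_cases h1' : j - d - 1 = 0
        · rw [h1']; exact h0
        · exact (mul_eq_zero.mp e).resolve_left (hA (j - d - 1) (by omega) (by omega))
  have := (key (j - 1)).1
  rwa [show j - (j-1) = 1 by omega] at this

lemma prop_lemma (W : ℕ → ℂ) (c : ℂ) (j : ℕ)
    (recV : ∀ k, 1 ≤ k → k ≤ m → aC (k-1) * X (k-1) + bC k * X k + aC k * X (k+1) = z * X k)
    (recW : ∀ k, 1 ≤ k → k ≤ j → aC (k-1) * W (k-1) + bC k * W k + aC k * W (k+1) = z * W k)
    (hjm : j ≤ m)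
    (hA : ∀ k, 1 ≤ k → k + 1 ≤ j → aC k ≠ 0)
    (hV0 : X 0 = 0) (hW0 : W 0 = 0) (h1 : W 1 = c * X 1) :
    ∀ k, k ≤ j → W k = c * X k := by
  have key : ∀ k, (k ≤ j → W k = c * X k) ∧ (k + 1 ≤ j → W (k+1) = c * X (k+1)) := by
    intro k
    induction k with
    | zero => exact ⟨fun _ => by rw [hV0, hW0, mul_zero], fun _ => h1⟩
    | succ k ih =>
      refine ⟨fun h => ih.2 h, fun h => ?_⟩
      have e1 := recW (k+1) (by omega) (by omega)
      have e2 := recV (k+1) (by omega) (by omega)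
      rw [Nat.add_sub_cancel] at e1 e2
      have hWk : W k = c * X k := ih.1 (by omega)
      have hWk1 : W (k+1) = c * X (k+1) := ih.2 (by omega)
      have hne := hA (k+1) (by omega) (by omega)
      have : aC (k+1) * W (k+2) = aC (k+1) * (c * X (k+2)) := by
        linear_combination e1 - c * e2 - aC k * hWk - bC (k+1) * hWk1 + z * hWk1
      exact mul_left_cancel₀ hne this
  exact fun k hk => (key k).1 hk

end


open Complex in
lemma telescope (X : ℕ → ℂ) (bC : ℕ → ℂ) (A : ℕ → ℝ) (z : ℂ) (m p : ℕ)
    (hp : 1 ≤ p)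
    (rec : ∀ k, 1 ≤ k → k ≤ m →
      (A (k-1) : ℂ) * X (k-1) + bC k * X k + (A k : ℂ) * X (k+1) = z * X k)
    (hXp : X (p - 1) = 0) :
    ∀ r, p - 1 ≤ r → r ≤ m →
      ∑ k ∈ Finset.Icc p r, ((z.im - (bC k).im) * Complex.normSq (X k))
        = ((A r : ℂ) * X (r+1) * (starRingEnd ℂ) (X r)).im := by
  intro r hr
  induction r, hr using Nat.le_induction with
  | base =>
    intro _
    rw [Finset.Icc_eq_empty (by omega), Finset.sum_empty, hXp]
    simp
  | succ r hr ih =>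
    intro hrm
    rw [Finset.sum_Icc_succ_top (by omega), ih (by omega)]
    have e := rec (r+1) (by omega) (by omega)
    rw [Nat.add_sub_cancel] at e
    have eRe := congrArg Complex.re e
    have eIm := congrArg Complex.im e
    simp only [Complex.add_re, Complex.add_im, Complex.mul_re, Complex.mul_im,
      Complex.ofReal_re, Complex.ofReal_im] at eRe eIm
    simp only [Complex.mul_im, Complex.mul_re, Complex.ofReal_re, Complex.ofReal_im,
      Complex.conj_re, Complex.conj_im, Complex.normSq_apply]
    linear_combination (X (r+1)).im * eRe - (X (r+1)).re * eIm


/-- **A dissipative Jacobi matrix with rank-one imaginary part and each of its upper-left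
corners `J_{[1,j]}`, `j = 1, …, n-1`, have no common eigenvalues.** -/
theorem dissipative_jacobi_no_common_eigenvalue_all_corners
    (n : ℕ) (b : ℕ → ℂ) (a : ℕ → ℝ)
    (hb1 : 0 < (b 1).im) (hbreal : ∀ k, 2 ≤ k → k ≤ n → (b k).im = 0)
    (ha : ∀ k, 1 ≤ k → k ≤ n - 1 → 0 < a k) :
    ∀ j, 1 ≤ j → j ≤ n - 1 → ∀ z : ℂ,
      ¬ ((∃ v : Fin n → ℂ, v ≠ 0 ∧
            (jacobiMatrix n b (fun k => (a k : ℂ))).mulVec v = z • v) ∧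
         (∃ w : Fin j → ℂ, w ≠ 0 ∧
            (jacobiMatrix j b (fun k => (a k : ℂ))).mulVec w = z • w)) := by
  rintro j hj1 hjn z ⟨⟨v, hv0, hv⟩, ⟨w, hw0, hw⟩⟩
  have hn2 : 2 ≤ n := by omega
  set aC : ℕ → ℂ := fun k => (a k : ℂ) with haC
  set V : ℕ → ℂ := jembed n v with hVdef
  set W : ℕ → ℂ := jembed j w with hWdef
  have recV := jacobi_row n b aC v z hv
  have recW := jacobi_row j b aC w z hw
  have hAne : ∀ k, 1 ≤ k → k + 1 ≤ n → aC k ≠ 0 := fun k h1 h2 =>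
    Complex.ofReal_ne_zero.mpr (ne_of_gt (ha k h1 (by omega)))
  have hAneJ : ∀ k, 1 ≤ k → k + 1 ≤ j → aC k ≠ 0 := fun k h1 h2 =>
    hAne k h1 (by omega)
  have hVout : ∀ k, n < k → V k = 0 := fun k hk => jembed_zero_of n v k (Or.inr hk)
  have hWout : ∀ k, j < k → W k = 0 := fun k hk => jembed_zero_of j w k (Or.inr hk)
  have hV0 : V 0 = 0 := jembed_zero_of n v 0 (Or.inl rfl)
  have hW0 : W 0 = 0 := jembed_zero_of j w 0 (Or.inl rfl)
  -- the first entries are nonzero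
  have hV1 : V 1 ≠ 0 := by
    intro h
    apply hv0
    funext i
    have := forward_zero V b aC z n recV hVout hV0 hAne h ((i : ℕ) + 1)
    rw [hVdef, jembed_eq] at this
    simpa using this
  have hW1 : W 1 ≠ 0 := by
    intro h
    apply hw0
    funext i
    have := forward_zero W b aC z j recW hWout hW0 hAneJ h ((i : ℕ) + 1)
    rw [hWdef, jembed_eq] at this
    simpa using this
  -- proportionality on the corner
  set c : ℂ := W 1 * (V 1)⁻¹ with hcdef
  have h1 : W 1 = c * V 1 := by
    rw [hcdef, mul_assoc, inv_mul_cancel₀ hV1, mul_one]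
  have hc : c ≠ 0 := mul_ne_zero hW1 (inv_ne_zero hV1)
  have hprop := prop_lemma V b aC z n W c j recV recW (by omega) hAneJ hV0 hW0 h1
  have hWj1 : W (j + 1) = 0 := hWout (j + 1) (by omega)
  have hAj : aC j ≠ 0 := hAne j hj1 (by omega)
  -- V (j+1) = 0
  have hVj1 : V (j + 1) = 0 := by
    have e1 := recV j hj1 (by omega)
    have e2 := recW j hj1 le_rfl
    have hWjm1 : W (j - 1) = c * V (j - 1) := hprop (j - 1) (by omega)
    have hWj : W j = c * V j := hprop j le_rfl
    have key : c * (aC j * V (j + 1)) = 0 := by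
      linear_combination c * e1 - e2 + aC (j - 1) * hWjm1 + b j * hWj - z * hWj + aC j * hWj1
    exact ((mul_eq_zero.mp ((mul_eq_zero.mp key).resolve_left hc)).resolve_left hAj)
  -- recurrence in telescoping form
  have recV' : ∀ k, 1 ≤ k → k ≤ n →
      ((a (k - 1) : ℝ) : ℂ) * V (k - 1) + b k * V k + ((a k : ℝ) : ℂ) * V (k + 1) = z * V k :=
    recV
  have hVn1 : V (n + 1) = 0 := hVout (n + 1) (by omega)
  -- Im z > 0
  have hzim : 0 < z.im := by
    have hsum1 := telescope V b a z n 1 le_rfl recV' hV0 n (by omega) le_rfl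
    rw [hVn1] at hsum1
    simp only [mul_zero, zero_mul, Complex.zero_im] at hsum1
    have hb' : ∑ k ∈ Finset.Icc 1 n, (b k).im * Complex.normSq (V k)
        = (b 1).im * Complex.normSq (V 1) := by
      refine Finset.sum_eq_single_of_mem 1 (Finset.mem_Icc.mpr ⟨le_rfl, by omega⟩) ?_
      intro k hk hne
      rw [Finset.mem_Icc] at hk
      rw [hbreal k (by omega) hk.2, zero_mul]
    have hexp : ∑ k ∈ Finset.Icc 1 n, ((z.im - (b k).im) * Complex.normSq (V k))
        = z.im * ∑ k ∈ Finset.Icc 1 n, Complex.normSq (V k)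
          - ∑ k ∈ Finset.Icc 1 n, (b k).im * Complex.normSq (V k) := by
      rw [Finset.mul_sum, ← Finset.sum_sub_distrib]
      exact Finset.sum_congr rfl fun k _ => by ring
    have hkey : z.im * ∑ k ∈ Finset.Icc 1 n, Complex.normSq (V k)
        = (b 1).im * Complex.normSq (V 1) := by
      rw [hexp, hb'] at hsum1
      linarith
    have hpos : 0 < Complex.normSq (V 1) := Complex.normSq_pos.mpr hV1
    have hle : Complex.normSq (V 1) ≤ ∑ k ∈ Finset.Icc 1 n, Complex.normSq (V k) :=
      Finset.single_le_sum (fun k _ => Complex.normSq_nonneg (V k))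
        (Finset.mem_Icc.mpr ⟨le_rfl, by omega⟩)
    nlinarith [mul_pos hb1 hpos]
  -- tail of V vanishes
  have hVtail : ∀ k, j + 2 ≤ k → V k = 0 := by
    have hsum2 := telescope V b a z n (j + 2) (by omega) recV'
      (by rw [show j + 2 - 1 = j + 1 from rfl]; exact hVj1) n (by omega) le_rfl
    rw [hVn1] at hsum2
    simp only [mul_zero, zero_mul, Complex.zero_im] at hsum2
    have hsame : ∀ k ∈ Finset.Icc (j + 2) n,
        (z.im - (b k).im) * Complex.normSq (V k) = z.im * Complex.normSq (V k) := by
      intro k hk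
      rw [Finset.mem_Icc] at hk
      rw [hbreal k (by omega) hk.2]
      ring
    rw [Finset.sum_congr rfl hsame] at hsum2
    have hterm := (Finset.sum_eq_zero_iff_of_nonneg
      (fun k _ => mul_nonneg (le_of_lt hzim) (Complex.normSq_nonneg (V k)))).mp hsum2
    intro k hk
    by_cases hkn : k ≤ n
    · have := hterm k (Finset.mem_Icc.mpr ⟨hk, hkn⟩)
      have h2 : Complex.normSq (V k) = 0 := by
        rcases mul_eq_zero.mp this with h | h
        · exact absurd h (ne_of_gt hzim)
        · exact h
      exact Complex.normSq_eq_zero.mp h2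
    · exact hVout k (by omega)
  -- conclude V j = 0, then V 1 = 0, contradiction
  have hVj : V j = 0 := by
    have e := recV (j + 1) (by omega) (by omega)
    rw [← hVdef] at e
    rw [Nat.add_sub_cancel, hVj1, hVtail (j + 2) le_rfl] at e
    simp only [mul_zero, zero_add, add_zero, zero_mul] at e
    exact (mul_eq_zero.mp e).resolve_left hAj
  exact hV1 (backward_zero V b aC z n j recV hV0 hAne (by omega) hVj hVj1 hj1)
end

section
/- Given complex numbers z_1, z_2 with Im z_1 > 0, Im z_2 > 0, the 2×2 matrix J with entries J_{11} = (Re z_1 Im z_1 + Re z_2 Im z_2)/(Im z_1 + Im z_2) + i(Im z_1 + Im z_2), J_{22} = (Re z_1 Im z_2 + Re z_2 Im z_1)/(Im z_1 + Im z_2), and J_{12} = J_{21} = sqrt((((Re z_1 - Re z_2)/(Im z_1 + Im z_2))² + 1) · Im z_1 · Im z_2), has characteristic polynomial (z - z_1)(z - z_2), i.e., its eigenvalues counted with multiplicity are z_1 and z_2. -/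
open Polynomial in
theorem charpoly_fin_two_aux {R : Type*} [CommRing R] (M : Matrix (Fin 2) (Fin 2) R) :
    M.charpoly = X ^ 2 - C M.trace * X + C M.det := by
  rw [Matrix.charpoly, Matrix.det_fin_two, Matrix.charmatrix_apply_eq,
    Matrix.charmatrix_apply_eq, Matrix.charmatrix_apply_ne _ _ _ (by decide),
    Matrix.charmatrix_apply_ne _ _ _ (by decide), Matrix.trace_fin_two, Matrix.det_fin_two]
  simp only [map_add, map_sub, map_mul]
  ring

/-- **Explicit reconstruction of a `2 × 2` dissipative Jacobi matrix from its two
eigenvalues `z₁, z₂` in the open upper half-plane.** -/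
theorem two_by_two_jacobi_reconstruction (z₁ z₂ : ℂ)
    (h₁ : 0 < z₁.im) (h₂ : 0 < z₂.im) :
    (!![(((z₁.re * z₁.im + z₂.re * z₂.im) / (z₁.im + z₂.im) : ℝ) : ℂ)
            + ((z₁.im + z₂.im : ℝ) : ℂ) * Complex.I,
        ((Real.sqrt ((((z₁.re - z₂.re) / (z₁.im + z₂.im)) ^ 2 + 1) * z₁.im * z₂.im) : ℝ) : ℂ);
        ((Real.sqrt ((((z₁.re - z₂.re) / (z₁.im + z₂.im)) ^ 2 + 1) * z₁.im * z₂.im) : ℝ) : ℂ),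
        (((z₁.re * z₂.im + z₂.re * z₁.im) / (z₁.im + z₂.im) : ℝ) : ℂ)] :
      Matrix (Fin 2) (Fin 2) ℂ).charpoly
      = (Polynomial.X - Polynomial.C z₁) * (Polynomial.X - Polynomial.C z₂) := by
  have hs : (0:ℝ) < z₁.im + z₂.im := by linarith
  have hs' : z₁.im + z₂.im ≠ 0 := ne_of_gt hs
  have hsC : ((z₁.im : ℂ) + (z₂.im : ℂ)) ≠ 0 := by
    rw [← Complex.ofReal_add]; exact_mod_cast hs'
  have hsq : (Real.sqrt ((((z₁.re - z₂.re) / (z₁.im + z₂.im)) ^ 2 + 1) * z₁.im * z₂.im) : ℝ)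
      * (Real.sqrt ((((z₁.re - z₂.re) / (z₁.im + z₂.im)) ^ 2 + 1) * z₁.im * z₂.im) : ℝ)
      = (((z₁.re - z₂.re) / (z₁.im + z₂.im)) ^ 2 + 1) * z₁.im * z₂.im := by
    exact Real.mul_self_sqrt (by positivity)
  have hz₁ : z₁ = (z₁.re : ℂ) + (z₁.im : ℂ) * Complex.I := (Complex.re_add_im z₁).symm
  have hz₂ : z₂ = (z₂.re : ℂ) + (z₂.im : ℂ) * Complex.I := (Complex.re_add_im z₂).symm
  rw [charpoly_fin_two_aux]
  have htr : (!![(((z₁.re * z₁.im + z₂.re * z₂.im) / (z₁.im + z₂.im) : ℝ) : ℂ)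
            + ((z₁.im + z₂.im : ℝ) : ℂ) * Complex.I,
        ((Real.sqrt ((((z₁.re - z₂.re) / (z₁.im + z₂.im)) ^ 2 + 1) * z₁.im * z₂.im) : ℝ) : ℂ);
        ((Real.sqrt ((((z₁.re - z₂.re) / (z₁.im + z₂.im)) ^ 2 + 1) * z₁.im * z₂.im) : ℝ) : ℂ),
        (((z₁.re * z₂.im + z₂.re * z₁.im) / (z₁.im + z₂.im) : ℝ) : ℂ)] :
      Matrix (Fin 2) (Fin 2) ℂ).trace = z₁ + z₂ := by
    rw [Matrix.trace_fin_two_of]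
    apply Complex.ext <;>
      simp only [Complex.add_re, Complex.add_im, Complex.mul_re, Complex.mul_im,
        Complex.ofReal_re, Complex.ofReal_im, Complex.I_re, Complex.I_im] <;>
      field_simp <;> ring
  have hdet : (!![(((z₁.re * z₁.im + z₂.re * z₂.im) / (z₁.im + z₂.im) : ℝ) : ℂ)
            + ((z₁.im + z₂.im : ℝ) : ℂ) * Complex.I,
        ((Real.sqrt ((((z₁.re - z₂.re) / (z₁.im + z₂.im)) ^ 2 + 1) * z₁.im * z₂.im) : ℝ) : ℂ);
        ((Real.sqrt ((((z₁.re - z₂.re) / (z₁.im + z₂.im)) ^ 2 + 1) * z₁.im * z₂.im) : ℝ) : ℂ),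
        (((z₁.re * z₂.im + z₂.re * z₁.im) / (z₁.im + z₂.im) : ℝ) : ℂ)] :
      Matrix (Fin 2) (Fin 2) ℂ).det = z₁ * z₂ := by
    rw [Matrix.det_fin_two_of]
    rw [show ((Real.sqrt ((((z₁.re - z₂.re) / (z₁.im + z₂.im)) ^ 2 + 1) * z₁.im * z₂.im) : ℝ) : ℂ)
        * ((Real.sqrt ((((z₁.re - z₂.re) / (z₁.im + z₂.im)) ^ 2 + 1) * z₁.im * z₂.im) : ℝ) : ℂ)
        = (((((z₁.re - z₂.re) / (z₁.im + z₂.im)) ^ 2 + 1) * z₁.im * z₂.im : ℝ) : ℂ) by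
      rw [← Complex.ofReal_mul, hsq]]
    apply Complex.ext <;>
      simp only [Complex.sub_re, Complex.sub_im, Complex.add_re, Complex.add_im,
        Complex.mul_re, Complex.mul_im, Complex.ofReal_re, Complex.ofReal_im,
        Complex.I_re, Complex.I_im] <;>
      field_simp <;> ring
  rw [htr, hdet]
  simp only [map_add, map_mul]
  ring
end

section
/- Let J be an n×n tridiagonal matrix of dissipative Jacobi type in which a_p = 0 for exactly one index p and a_k > 0 for k ≠ p, with Im b_1 > 0 and b_k real for k ≥ 2 and 1 ≤ p ≤ n-1. Then J is block-diagonal: J = diag(J_{11}, J_{22}) where J_{11} = J_{[1,p]} and J_{22} = J_{[p+1,n]}, the spectrum of J (with algebraic multiplicity) is the union of the spectra of J_{11} and J_{22}, J_{22} is self-adjoint (so all its eigenvalues are real), and all eigenvalues of J_{11} have positive imaginary part; consequently J has exactly p non-real eigenvalues counted with algebraic multiplicity. -/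
open Matrix Polynomial

lemma my_eval_charpoly {m : ℕ} (M : Matrix (Fin m) (Fin m) ℂ) (z : ℂ) :
    M.charpoly.eval z = (z • (1 : Matrix (Fin m) (Fin m) ℂ) - M).det := by
  rw [Matrix.charpoly, ← coe_evalRingHom, RingHom.map_det]
  congr 1
  ext i j
  by_cases h : i = j <;>
    simp [Matrix.charmatrix_apply, h, Matrix.one_apply, Matrix.diagonal_apply]

lemma my_exists_eigvec {m : ℕ} {M : Matrix (Fin m) (Fin m) ℂ} {z : ℂ}
    (hz : M.charpoly.IsRoot z) : ∃ v : Fin m → ℂ, v ≠ 0 ∧ M *ᵥ v = z • v := by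
  have hdet : (z • (1 : Matrix (Fin m) (Fin m) ℂ) - M).det = 0 := by
    rw [← my_eval_charpoly]; exact hz
  obtain ⟨v, hv0, hv⟩ := Matrix.exists_mulVec_eq_zero_iff.mpr hdet
  refine ⟨v, hv0, ?_⟩
  rwa [Matrix.sub_mulVec, Matrix.smul_mulVec, Matrix.one_mulVec, sub_eq_zero,
    eq_comm] at hv

lemma my_sesq_eq {m : ℕ} (M : Matrix (Fin m) (Fin m) ℂ) (v : Fin m → ℂ) (z : ℂ)
    (he : M *ᵥ v = z • v) :
    ∑ i, ∑ j, (starRingEnd ℂ) (v i) * (M i j - (starRingEnd ℂ) (M j i)) * v j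
      = ((2 * (z.im * ∑ i, Complex.normSq (v i)) : ℝ) : ℂ) * Complex.I := by
  have hS : ∑ i, ∑ j, (starRingEnd ℂ) (v i) * M i j * v j
      = z * ((∑ i, Complex.normSq (v i) : ℝ) : ℂ) := by
    have key : ∀ i, ∑ j, (starRingEnd ℂ) (v i) * M i j * v j
        = z * ((Complex.normSq (v i) : ℝ) : ℂ) := by
      intro i
      have h1 : ∑ j, (starRingEnd ℂ) (v i) * M i j * v j
          = (starRingEnd ℂ) (v i) * ((M *ᵥ v) i) := by
        simp [Matrix.mulVec, dotProduct, Finset.mul_sum, mul_assoc]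
      rw [h1, he]
      simp only [Pi.smul_apply, smul_eq_mul]
      rw [Complex.normSq_eq_conj_mul_self]; ring
    rw [Finset.sum_congr rfl (fun i _ => key i)]
    push_cast
    rw [← Finset.mul_sum]
  have hT : ∑ i, ∑ j, (starRingEnd ℂ) (v i) * (starRingEnd ℂ) (M j i) * v j
      = (starRingEnd ℂ) (∑ i, ∑ j, (starRingEnd ℂ) (v i) * M i j * v j) := by
    rw [Finset.sum_comm, map_sum]
    refine Finset.sum_congr rfl fun α _ => ?_
    rw [map_sum]
    refine Finset.sum_congr rfl fun β _ => ?_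
    simp only [_root_.map_mul, Complex.conj_conj]
    ring
  have expand : ∑ i, ∑ j, (starRingEnd ℂ) (v i) * (M i j - (starRingEnd ℂ) (M j i)) * v j
      = (∑ i, ∑ j, (starRingEnd ℂ) (v i) * M i j * v j)
        - ∑ i, ∑ j, (starRingEnd ℂ) (v i) * (starRingEnd ℂ) (M j i) * v j := by
    rw [← Finset.sum_sub_distrib]
    refine Finset.sum_congr rfl fun i _ => ?_
    rw [← Finset.sum_sub_distrib]
    refine Finset.sum_congr rfl fun j _ => ?_
    ring
  rw [expand, hT, hS, _root_.map_mul, Complex.conj_ofReal]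
  rw [← sub_mul, Complex.sub_conj]
  push_cast
  ring

lemma my_sum_normSq_pos {m : ℕ} {v : Fin m → ℂ} (hv : v ≠ 0) :
    0 < ∑ i, Complex.normSq (v i) := by
  obtain ⟨i, hi⟩ := Function.ne_iff.mp hv
  exact Finset.sum_pos' (fun j _ => Complex.normSq_nonneg _)
    ⟨i, Finset.mem_univ i, Complex.normSq_pos.mpr hi⟩

lemma my_hermitian_roots_real {m : ℕ} {M : Matrix (Fin m) (Fin m) ℂ} (hM : M.IsHermitian) :
    ∀ z ∈ M.charpoly.roots, z.im = 0 := by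
  intro z hz
  obtain ⟨v, hv, he⟩ := my_exists_eigvec (isRoot_of_mem_roots hz)
  have h0 : ∀ i j : Fin m, M i j - (starRingEnd ℂ) (M j i) = 0 := by
    intro i j
    have := congrFun (congrFun hM.eq i) j
    rw [Matrix.conjTranspose_apply] at this
    rw [← this]; simp
  have := my_sesq_eq M v z he
  simp only [h0, zero_mul, mul_zero, Finset.sum_const_zero] at this
  have hr : (2 * (z.im * ∑ i, Complex.normSq (v i)) : ℝ) = 0 := by
    rcases mul_eq_zero.mp this.symm with h | h
    · exact_mod_cast h
    · exact absurd h Complex.I_ne_zero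
  have hN := my_sum_normSq_pos hv
  nlinarith

lemma my_eigvec_ne {p : ℕ} (hp1 : 0 < p) (b : ℕ → ℂ) (a : ℕ → ℝ)
    (ha' : ∀ k, 1 ≤ k → k < p → a k ≠ 0)
    {z : ℂ} {v : Fin p → ℂ} (hv : v ≠ 0)
    (he : jacobiMatrix p b (fun k => (a k : ℂ)) *ᵥ v = z • v) :
    v ⟨0, hp1⟩ ≠ 0 := by
  intro h0
  have key : ∀ k, ∀ hk : k < p, v ⟨k, hk⟩ = 0 := by
    intro k
    induction k using Nat.strong_induction_on with
    | _ k IH =>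
      intro hk
      match k with
      | 0 => exact h0
      | (k' + 1) =>
        have hk' : k' < p := by omega
        have hrow := congrFun he ⟨k', hk'⟩
        simp only [Matrix.mulVec, dotProduct, Pi.smul_apply, smul_eq_mul] at hrow
        have hvk' : v ⟨k', hk'⟩ = 0 := IH k' (by omega) hk'
        rw [hvk', mul_zero] at hrow
        have hsum : ∑ j, jacobiMatrix p b (fun k => (a k : ℂ)) ⟨k', hk'⟩ j * v j
            = jacobiMatrix p b (fun k => (a k : ℂ)) ⟨k', hk'⟩ ⟨k' + 1, hk⟩ * v ⟨k' + 1, hk⟩ := by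
          refine Fintype.sum_eq_single _ (fun j hj => ?_)
          have hjv : (j : ℕ) ≠ k' + 1 := fun h => hj (Fin.ext h)
          rcases lt_or_gt_of_ne hjv with hlt | hgt
          · have : v j = 0 := by
              have := IH (j : ℕ) (by omega) j.isLt
              rwa [Fin.eta] at this
            rw [this, mul_zero]
          · have : jacobiMatrix p b (fun k => (a k : ℂ)) ⟨k', hk'⟩ j = 0 := by
              simp only [jacobiMatrix, Matrix.of_apply]
              rw [if_neg (by omega), if_neg (by omega), if_neg (by omega)]
            rw [this, zero_mul]
        rw [hsum] at hrow
        have hentry : jacobiMatrix p b (fun k => (a k : ℂ)) ⟨k', hk'⟩ ⟨k' + 1, hk⟩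
            = ((a (k' + 1) : ℝ) : ℂ) := by
          simp only [jacobiMatrix, Matrix.of_apply]
          rw [if_neg (by omega)]
          simp
        rw [hentry] at hrow
        have hane : ((a (k' + 1) : ℝ) : ℂ) ≠ 0 := by
          exact_mod_cast ha' (k' + 1) (by omega) (by omega)
        exact (mul_eq_zero.mp hrow).resolve_left hane
  apply hv
  funext j
  have := key (j : ℕ) j.isLt
  rwa [Fin.eta] at this

lemma my_dissipative_roots {p n : ℕ} (hp1 : 0 < p) (hpn : p ≤ n - 1) (hn : 1 ≤ n)
    (b : ℕ → ℂ) (a : ℕ → ℝ) (hb1 : 0 < (b 1).im)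
    (hbreal : ∀ k, 2 ≤ k → k ≤ n → (b k).im = 0)
    (ha' : ∀ k, 1 ≤ k → k < p → a k ≠ 0) :
    ∀ z ∈ (jacobiMatrix p b (fun k => (a k : ℂ))).charpoly.roots, 0 < z.im := by
  intro z hz
  obtain ⟨v, hv, he⟩ := my_exists_eigvec (isRoot_of_mem_roots hz)
  set M := jacobiMatrix p b (fun k => (a k : ℂ)) with hM
  have hpn' : p < n := by omega
  have i0 : Fin p := ⟨0, hp1⟩
  have hD : ∀ i j : Fin p, M i j - (starRingEnd ℂ) (M j i)
      = if (i : ℕ) = 0 ∧ (j : ℕ) = 0 then ((2 * (b 1).im : ℝ) : ℂ) * Complex.I else 0 := by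
    intro i j
    by_cases hij : (i : ℕ) = (j : ℕ)
    · simp only [hM, jacobiMatrix, Matrix.of_apply, if_pos hij, if_pos hij.symm]
      rw [hij]
      rcases Nat.eq_zero_or_pos (j : ℕ) with hj0 | hj0
      · rw [if_pos ⟨by omega, hj0⟩, hj0]
        rw [Complex.sub_conj]
      · rw [if_neg (by omega)]
        rw [Complex.sub_conj, hbreal ((j : ℕ) + 1) (by omega) (by omega)]
        simp
    · by_cases h2 : (i : ℕ) + 1 = (j : ℕ)
      · simp only [hM, jacobiMatrix, Matrix.of_apply]
        rw [if_neg hij, if_pos h2, if_neg (Ne.symm hij), if_neg (by omega), if_pos h2,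
          if_neg (by omega)]
        simp [Complex.conj_ofReal]
      · by_cases h3 : (j : ℕ) + 1 = (i : ℕ)
        · simp only [hM, jacobiMatrix, Matrix.of_apply]
          rw [if_neg hij, if_neg h2, if_pos h3, if_neg (Ne.symm hij), if_pos h3,
            if_neg (by omega)]
          simp [Complex.conj_ofReal]
        · simp only [hM, jacobiMatrix, Matrix.of_apply]
          rw [if_neg hij, if_neg h2, if_neg h3, if_neg (Ne.symm hij), if_neg h3, if_neg h2]
          simp [if_neg (by omega : ¬((i : ℕ) = 0 ∧ (j : ℕ) = 0))]
  have hsum : ∑ i, ∑ j, (starRingEnd ℂ) (v i) * (M i j - (starRingEnd ℂ) (M j i)) * v j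
      = ((2 * ((b 1).im * Complex.normSq (v ⟨0, hp1⟩)) : ℝ) : ℂ) * Complex.I := by
    rw [Fintype.sum_eq_single (⟨0, hp1⟩ : Fin p) (fun i hi => ?_)]
    · rw [Fintype.sum_eq_single (⟨0, hp1⟩ : Fin p) (fun j hj => ?_)]
      · rw [hD]
        rw [if_pos ⟨rfl, rfl⟩]
        rw [mul_comm ((starRingEnd ℂ) _), mul_assoc, mul_comm _ (v _), ← mul_assoc,
          mul_assoc _ (v _) _, mul_comm (v _) ((starRingEnd ℂ) _),
          ← Complex.normSq_eq_conj_mul_self]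
        push_cast
        ring
      · rw [hD, if_neg, mul_zero, zero_mul]
        exact fun h => hj (Fin.ext h.2)
    · refine Finset.sum_eq_zero fun j _ => ?_
      rw [hD, if_neg, mul_zero, zero_mul]
      exact fun h => hi (Fin.ext h.1)
  have hkey := my_sesq_eq M v z he
  rw [hsum] at hkey
  have hre : (2 * ((b 1).im * Complex.normSq (v ⟨0, hp1⟩)) : ℝ)
      = (2 * (z.im * ∑ i, Complex.normSq (v i)) : ℝ) := by
    have := mul_right_cancel₀ Complex.I_ne_zero hkey
    exact_mod_cast this
  have hN := my_sum_normSq_pos hv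
  have hv0 : v ⟨0, hp1⟩ ≠ 0 := my_eigvec_ne hp1 b a ha' hv he
  have hns : 0 < Complex.normSq (v ⟨0, hp1⟩) := Complex.normSq_pos.mpr hv0
  nlinarith

lemma my_block_eq (n p : ℕ) (hpn : p + (n - p) = n) (b : ℕ → ℂ) (a : ℕ → ℝ)
    (hap : a p = 0) :
    (jacobiMatrix n b (fun k => (a k : ℂ))).submatrix
        (finSumFinEquiv.trans (finCongr hpn)) (finSumFinEquiv.trans (finCongr hpn))
      = Matrix.fromBlocks (jacobiMatrix p b (fun k => (a k : ℂ))) 0 0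
          (jacobiMatrix (n - p) (fun k => b (k + p)) (fun k => (a (k + p) : ℂ))) := by
  ext i j
  cases i with
  | inl i =>
    cases j with
    | inl j =>
      simp only [Matrix.submatrix_apply, Matrix.fromBlocks_apply₁₁, Equiv.trans_apply,
        finSumFinEquiv_apply_left, finCongr_apply, jacobiMatrix, Matrix.of_apply,
        Fin.coe_cast, Fin.coe_castAdd]
    | inr j =>
      simp only [Matrix.submatrix_apply, Matrix.fromBlocks_apply₁₂, Equiv.trans_apply,
        finSumFinEquiv_apply_left, finSumFinEquiv_apply_right, finCongr_apply,
        jacobiMatrix, Matrix.of_apply, Fin.coe_cast, Fin.coe_castAdd, Fin.coe_natAdd,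
        Matrix.zero_apply]
      have hi := i.isLt
      rw [if_neg (by omega)]
      by_cases h2 : (i : ℕ) + 1 = p + (j : ℕ)
      · rw [if_pos h2]
        have : (i : ℕ) + 1 = p := by omega
        rw [this, hap]
        simp
      · rw [if_neg h2, if_neg (by omega)]
  | inr i =>
    cases j with
    | inl j =>
      simp only [Matrix.submatrix_apply, Matrix.fromBlocks_apply₂₁, Equiv.trans_apply,
        finSumFinEquiv_apply_left, finSumFinEquiv_apply_right, finCongr_apply,
        jacobiMatrix, Matrix.of_apply, Fin.coe_cast, Fin.coe_castAdd, Fin.coe_natAdd,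
        Matrix.zero_apply]
      have hj := j.isLt
      rw [if_neg (by omega), if_neg (by omega)]
      by_cases h3 : (j : ℕ) + 1 = p + (i : ℕ)
      · rw [if_pos h3]
        have : (j : ℕ) + 1 = p := by omega
        rw [this, hap]
        simp
      · rw [if_neg h3]
    | inr j =>
      simp only [Matrix.submatrix_apply, Matrix.fromBlocks_apply₂₂, Equiv.trans_apply,
        finSumFinEquiv_apply_right, finCongr_apply, jacobiMatrix, Matrix.of_apply,
        Fin.coe_cast, Fin.coe_natAdd]
      by_cases h1 : (i : ℕ) = (j : ℕ)
      · rw [if_pos (by omega), if_pos h1]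
        have : p + (i : ℕ) + 1 = (i : ℕ) + 1 + p := by omega
        rw [this]
      · rw [if_neg (by omega), if_neg h1]
        by_cases h2 : (i : ℕ) + 1 = (j : ℕ)
        · rw [if_pos (by omega), if_pos h2]
          have : p + (i : ℕ) + 1 = (i : ℕ) + 1 + p := by omega
          rw [this]
        · rw [if_neg (by omega), if_neg h2]
          by_cases h3 : (j : ℕ) + 1 = (i : ℕ)
          · rw [if_pos (by omega), if_pos h3]
            have : p + (j : ℕ) + 1 = (j : ℕ) + 1 + p := by omega
            rw [this]
          · rw [if_neg (by omega), if_neg h3]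


open Classical in
/-- **Block decomposition of a dissipative tridiagonal matrix with one vanishing
off-diagonal entry `a_p = 0`.**  `J` is block diagonal with blocks `J₁₁ = J_{[1,p]}` and
`J₂₂ = J_{[p+1,n]}`; the spectrum with multiplicity is the union of the two blocks'
spectra; `J₂₂` is self-adjoint with real eigenvalues; all eigenvalues of `J₁₁` have
positive imaginary part; and `J` has exactly `p` non-real eigenvalues counted with
algebraic multiplicity. -/
theorem tridiagonal_block_decomposition
    (n p : ℕ) (hn : 1 ≤ n) (hp1 : 1 ≤ p) (hpn : p ≤ n - 1)
    (b : ℕ → ℂ) (a : ℕ → ℝ)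
    (hb1 : 0 < (b 1).im) (hbreal : ∀ k, 2 ≤ k → k ≤ n → (b k).im = 0)
    (hap : a p = 0) (ha : ∀ k, 1 ≤ k → k ≤ n - 1 → k ≠ p → 0 < a k) :
    (∀ i j : Fin n, (((i : ℕ) < p ∧ p ≤ (j : ℕ)) ∨ ((j : ℕ) < p ∧ p ≤ (i : ℕ))) →
        jacobiMatrix n b (fun k => (a k : ℂ)) i j = 0) ∧
    (jacobiMatrix n b (fun k => (a k : ℂ))).charpoly
      = (jacobiMatrix p b (fun k => (a k : ℂ))).charpoly *
        (jacobiMatrix (n - p) (fun k => b (k + p)) (fun k => (a (k + p) : ℂ))).charpoly ∧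
    (jacobiMatrix (n - p) (fun k => b (k + p)) (fun k => (a (k + p) : ℂ))).IsHermitian ∧
    (∀ z ∈ (jacobiMatrix (n - p) (fun k => b (k + p))
        (fun k => (a (k + p) : ℂ))).charpoly.roots, z.im = 0) ∧
    (∀ z ∈ (jacobiMatrix p b (fun k => (a k : ℂ))).charpoly.roots, 0 < z.im) ∧
    Multiset.card
        (((jacobiMatrix n b (fun k => (a k : ℂ))).charpoly.roots).filter
          (fun z => z.im ≠ 0)) = p := by
  have hpn' : p < n := by omega
  have hpq : p + (n - p) = n := by omega
  -- Part 1: block structure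
  have part1 : ∀ i j : Fin n, (((i : ℕ) < p ∧ p ≤ (j : ℕ)) ∨ ((j : ℕ) < p ∧ p ≤ (i : ℕ))) →
      jacobiMatrix n b (fun k => (a k : ℂ)) i j = 0 := by
    intro i j hij
    simp only [jacobiMatrix, Matrix.of_apply]
    rcases hij with ⟨h1, h2⟩ | ⟨h1, h2⟩
    · rw [if_neg (by omega)]
      by_cases hadj : (i : ℕ) + 1 = (j : ℕ)
      · rw [if_pos hadj]
        have : (i : ℕ) + 1 = p := by omega
        rw [this, hap]; simp
      · rw [if_neg hadj, if_neg (by omega)]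
    · rw [if_neg (by omega), if_neg (by omega)]
      by_cases hadj : (j : ℕ) + 1 = (i : ℕ)
      · rw [if_pos hadj]
        have : (j : ℕ) + 1 = p := by omega
        rw [this, hap]; simp
      · rw [if_neg hadj]
  -- Part 2: charpoly factorization
  have part2 : (jacobiMatrix n b (fun k => (a k : ℂ))).charpoly
      = (jacobiMatrix p b (fun k => (a k : ℂ))).charpoly *
        (jacobiMatrix (n - p) (fun k => b (k + p)) (fun k => (a (k + p) : ℂ))).charpoly := by
    set e := finSumFinEquiv.trans (finCongr hpq) with he
    have h1 : Matrix.reindex e.symm e.symm (jacobiMatrix n b (fun k => (a k : ℂ)))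
        = Matrix.fromBlocks (jacobiMatrix p b (fun k => (a k : ℂ))) 0 0
          (jacobiMatrix (n - p) (fun k => b (k + p)) (fun k => (a (k + p) : ℂ))) := by
      rw [Matrix.reindex_apply, Equiv.symm_symm]
      exact my_block_eq n p hpq b a hap
    have h2 := Matrix.charpoly_reindex e.symm (jacobiMatrix n b (fun k => (a k : ℂ)))
    rw [h1, Matrix.charpoly_fromBlocks_zero₂₁] at h2
    exact h2.symm
  -- Part 3: J22 is Hermitian
  have part3 : (jacobiMatrix (n - p) (fun k => b (k + p))
      (fun k => (a (k + p) : ℂ))).IsHermitian := by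
    unfold Matrix.IsHermitian
    ext i j
    rw [Matrix.conjTranspose_apply]
    simp only [jacobiMatrix, Matrix.of_apply]
    have hi := i.isLt
    have hj := j.isLt
    by_cases h1 : (i : ℕ) = (j : ℕ)
    · rw [if_pos h1.symm, if_pos h1, h1]
      rw [Complex.star_def, Complex.conj_eq_iff_im]
      exact hbreal ((j : ℕ) + 1 + p) (by omega) (by omega)
    · rw [if_neg (Ne.symm h1), if_neg h1]
      by_cases h2 : (i : ℕ) + 1 = (j : ℕ)
      · rw [if_neg (by omega : ¬((j : ℕ) + 1 = (i : ℕ))), if_pos h2]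
        rw [Complex.star_def, Complex.conj_ofReal, if_pos h2]
      · by_cases h3 : (j : ℕ) + 1 = (i : ℕ)
        · rw [if_pos h3, if_neg h2]
          rw [Complex.star_def, Complex.conj_ofReal, if_pos h3]
        · rw [if_neg h3, if_neg h2]
          rw [if_neg h2, if_neg h3]
          simp
  -- Part 4: roots of J22 are real
  have part4 : ∀ z ∈ (jacobiMatrix (n - p) (fun k => b (k + p))
      (fun k => (a (k + p) : ℂ))).charpoly.roots, z.im = 0 :=
    my_hermitian_roots_real part3
  -- Part 5: roots of J11 have positive imaginary part
  have part5 : ∀ z ∈ (jacobiMatrix p b (fun k => (a k : ℂ))).charpoly.roots, 0 < z.im := by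
    refine my_dissipative_roots hp1 hpn hn b a hb1 hbreal ?_
    intro k hk1 hk2
    exact ne_of_gt (ha k hk1 (by omega) (by omega))
  refine ⟨part1, part2, part3, part4, part5, ?_⟩
  -- Part 6: counting non-real roots
  have hJ11ne : (jacobiMatrix p b (fun k => (a k : ℂ))).charpoly ≠ 0 :=
    (Matrix.charpoly_monic _).ne_zero
  have hJ22ne : (jacobiMatrix (n - p) (fun k => b (k + p))
      (fun k => (a (k + p) : ℂ))).charpoly ≠ 0 :=
    (Matrix.charpoly_monic _).ne_zero
  rw [part2, Polynomial.roots_mul (mul_ne_zero hJ11ne hJ22ne), Multiset.filter_add]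
  have h22 : Multiset.filter (fun z => z.im ≠ 0)
      (jacobiMatrix (n - p) (fun k => b (k + p))
        (fun k => (a (k + p) : ℂ))).charpoly.roots = 0 := by
    rw [Multiset.filter_eq_nil]
    intro z hz
    exact not_not_intro (part4 z hz)
  have h11 : Multiset.filter (fun z => z.im ≠ 0)
      (jacobiMatrix p b (fun k => (a k : ℂ))).charpoly.roots
      = (jacobiMatrix p b (fun k => (a k : ℂ))).charpoly.roots := by
    rw [Multiset.filter_eq_self]
    intro z hz
    exact ne_of_gt (part5 z hz)
  rw [h22, h11, add_zero]
  have hcard := Polynomial.splits_iff_card_roots.mp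
    (IsAlgClosed.splits (k := ℂ) (jacobiMatrix p b (fun k => (a k : ℂ))).charpoly)
  rw [hcard, Matrix.charpoly_natDegree_eq_dim, Fintype.card_fin]
end

section
/- Let l > 0 and let t be a complex number with Im t ≠ 0 and t ≠ ± il. Set x = ln|(t+il)/(t-il)| and y = arg((t+il)/(t-il)). Then the numbers z_k = 2l(y + 2πk + ix)/((y + 2πk)² + x²), k ∈ ℤ, satisfy Σ_{k=-∞}^{∞} Im z_k = Im t. -/
open MeasureTheory Complex Real Set AddCircle

instance real_fact_zero_lt_one : Fact ((0:ℝ) < 1) := ⟨one_pos⟩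

noncomputable section

lemma fc_exp (w : ℂ) (hw : w.im ≠ 0) (n : ℤ) :
    fourierCoeff (AddCircle.liftIoc 1 0 (fun θ : ℝ => Complex.exp (2*π*Complex.I*w*θ))) n
      = (Complex.exp (2*π*Complex.I*w) - 1) / (2*π*Complex.I*(w - n)) := by
  have hwn : w - (n:ℂ) ≠ 0 := by
    intro h
    apply hw
    have := congrArg Complex.im h
    simpa using this
  have hc : (2*π*Complex.I*(w - n)) ≠ 0 := by
    apply mul_ne_zero _ hwn
    simp [Real.pi_ne_zero, Complex.I_ne_zero, Complex.ofReal_ne_zero]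
  rw [fourierCoeff_liftIoc_eq]
  rw [fourierCoeffOn_eq_integral]
  norm_num
  have h1 : ∀ x : ℝ, (starRingEnd ℂ) (Complex.exp (2*π*Complex.I*n*x)) * Complex.exp (2*π*Complex.I*w*x)
      = Complex.exp ((2*π*Complex.I*(w-n)) * x) := by
    intro x
    rw [← Complex.exp_conj, ← Complex.exp_add]
    congr 1
    have e1 : (2*π*Complex.I*n*x : ℂ) = ((2*π*n*x : ℝ):ℂ) * Complex.I := by push_cast; ring
    rw [e1, map_mul, Complex.conj_ofReal, Complex.conj_I]
    push_cast
    ring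
  simp_rw [h1]
  rw [integral_exp_mul_complex hc]
  push_cast
  rw [mul_zero, Complex.exp_zero, mul_one]
  congr 2
  rw [mul_sub (2*(π:ℂ)*Complex.I), Complex.exp_sub]
  rw [show (2*(π:ℂ)*Complex.I*n) = n * (2*π*Complex.I) by ring, Complex.exp_int_mul_two_pi_mul_I]
  rw [div_one]

lemma parseval_exp (w : ℂ) (hw : 0 < w.im) :
    ∑' n : ℤ, ‖(Complex.exp (2*π*Complex.I*w) - 1) / (2*π*Complex.I*(w - n))‖^2
      = (Real.exp (-(4*π*w.im)) - 1) / (-(4*π*w.im)) := by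
  set F : ℝ → ℂ := fun θ : ℝ => Complex.exp (2*π*Complex.I*w*θ) with hF
  set g : AddCircle (1:ℝ) → ℂ := AddCircle.liftIoc 1 0 F with hg
  have hre : ∀ x : ℝ, (2*(π:ℂ)*Complex.I*w*(x:ℝ)).re = -(2*π*w.im*x) := by
    intro x
    simp [Complex.mul_re, Complex.mul_im]
  have hnorm : ∀ x : ℝ, ‖F x‖^2 = Real.exp (-(4*π*w.im) * x) := by
    intro x
    rw [hF]
    simp only [Complex.norm_exp, hre x]
    rw [sq, ← Real.exp_add]
    congr 1
    ring
  have hmeas : Measurable g := by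
    have : g = (F ∘ Subtype.val) ∘ (AddCircle.measurableEquivIoc 1 0) := rfl
    rw [this]
    exact ((Complex.continuous_exp.comp (by continuity)).measurable.comp
      measurable_subtype_coe).comp (AddCircle.measurableEquivIoc 1 0).measurable
  have hbd : ∀ z : AddCircle (1:ℝ), ‖g z‖ ≤ 1 := by
    intro z
    have : g z = F ((AddCircle.equivIoc 1 0 z : ℝ)) := rfl
    rw [this]
    have hmem := (AddCircle.equivIoc 1 0 z).2
    have hx : (0:ℝ) ≤ (AddCircle.equivIoc 1 0 z : ℝ) := le_of_lt hmem.1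
    have : ‖F ((AddCircle.equivIoc 1 0 z : ℝ))‖ = Real.exp (-(2*π*w.im*(AddCircle.equivIoc 1 0 z : ℝ))) := by
      rw [hF]; simp only [Complex.norm_exp, hre]
    rw [this]
    rw [Real.exp_le_one_iff]
    have : (0:ℝ) ≤ 2*π*w.im*(AddCircle.equivIoc 1 0 z : ℝ) := by
      have := Real.pi_pos
      positivity
    linarith
  have hmem : MemLp g 2 haarAddCircle :=
    MemLp.of_bound hmeas.aestronglyMeasurable 1 (Filter.Eventually.of_forall hbd)
  have hP := tsum_sq_fourierCoeff (hmem.toLp g)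
  have hcoeff : ∀ i : ℤ, fourierCoeff (⇑(hmem.toLp g)) i = fourierCoeff g i := by
    intro i
    unfold fourierCoeff
    apply integral_congr_ae
    filter_upwards [hmem.coeFn_toLp] with z hz
    rw [hz]
  have hwne : w.im ≠ 0 := ne_of_gt hw
  have hfc : ∀ i : ℤ, fourierCoeff g i
      = (Complex.exp (2*π*Complex.I*w) - 1) / (2*π*Complex.I*(w - i)) :=
    fun i => fc_exp w hwne i
  have hc0 : -(4*π*w.im) ≠ 0 := by
    have := Real.pi_pos
    intro h
    nlinarith
  have h1 : ∫ t, ‖(hmem.toLp g : Lp ℂ 2 haarAddCircle) t‖^2 ∂haarAddCircle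
      = ∫ t, ‖g t‖^2 ∂haarAddCircle := by
    apply integral_congr_ae
    filter_upwards [hmem.coeFn_toLp] with z hz
    rw [hz]
  have h2 : (volume : Measure (AddCircle (1:ℝ))) = haarAddCircle := by
    rw [AddCircle.volume_eq_smul_haarAddCircle]; simp
  have h3 : ∫ t, ‖g t‖^2 ∂haarAddCircle = ∫ x in (0:ℝ)..0+1, ‖g x‖^2 := by
    rw [← h2, ← AddCircle.intervalIntegral_preimage 1 0 (fun t => ‖g t‖^2)]
  have h4 : ∫ x in (0:ℝ)..0+1, ‖g x‖^2 = ∫ x in (0:ℝ)..0+1, Real.exp (-(4*π*w.im) * x) := by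
    refine intervalIntegral.integral_congr_ae (MeasureTheory.ae_of_all _ fun x hx => ?_)
    rw [Set.uIoc_of_le (by norm_num : (0:ℝ) ≤ 0+1)] at hx
    rw [hg, AddCircle.liftIoc_coe_apply hx]
    exact hnorm x
  have h5 : ∫ x in (0:ℝ)..0+1, Real.exp (-(4*π*w.im) * x)
      = (Real.exp (-(4*π*w.im)) - 1) / (-(4*π*w.im)) := by
    rw [intervalIntegral.integral_comp_mul_left (f := fun x => Real.exp x) hc0]
    simp only [mul_zero, mul_one, zero_add]
    rw [integral_exp]
    rw [Real.exp_zero, smul_eq_mul]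
    field_simp
  rw [h1, h3, h4, h5] at hP
  simp_rw [hcoeff, hfc] at hP
  exact hP

lemma tsum_core (α β : ℝ) (hα : 0 < α) :
    ∑' k : ℤ, 1 / ((β + k)^2 + α^2)
      = π * Real.sinh (2*π*α) / (α * (Real.cosh (2*π*α) - Real.cos (2*π*β))) := by
  have hπ := Real.pi_pos
  set w : ℂ := (β:ℂ) + (α:ℂ) * Complex.I with hwdef
  have him : w.im = α := by simp [hwdef]
  have hpe := parseval_exp w (by rw [him]; exact hα)
  rw [him] at hpe
  set E : ℂ := Complex.exp (2*π*Complex.I*w) with hE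
  set K : ℝ := Complex.normSq (E - 1) with hKdef
  -- value of E
  have hre2 : (2*(π:ℂ)*Complex.I*w).re = -(2*π*α) := by
    simp [hwdef, Complex.mul_re, Complex.mul_im]
  have him2 : (2*(π:ℂ)*Complex.I*w).im = 2*π*β := by
    simp [hwdef, Complex.mul_re, Complex.mul_im]
  have hEre : E.re = Real.exp (-(2*π*α)) * Real.cos (2*π*β) := by
    rw [hE, Complex.exp_re, hre2, him2]
  have hEim : E.im = Real.exp (-(2*π*α)) * Real.sin (2*π*β) := by
    rw [hE, Complex.exp_im, hre2, him2]
  have hKval : K = Real.exp (-(2*π*α)) * Real.exp (-(2*π*α))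
      - 2 * Real.exp (-(2*π*α)) * Real.cos (2*π*β) + 1 := by
    have hsc := Real.sin_sq_add_cos_sq (2*π*β)
    rw [hKdef, Complex.normSq_apply, Complex.sub_re, Complex.sub_im, Complex.one_re,
      Complex.one_im, hEre, hEim]
    nlinarith [hsc]
  have hEne : E - 1 ≠ 0 := by
    intro h
    have habs : ‖E‖ = Real.exp (-(2*π*α)) := by
      rw [hE, Complex.norm_exp, hre2]
    have hlt : ‖E‖ < 1 := by
      rw [habs, Real.exp_lt_one_iff]
      nlinarith
    rw [sub_eq_zero] at h
    rw [h] at hlt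
    simp at hlt
  have hK : K ≠ 0 := fun h => hEne (Complex.normSq_eq_zero.mp (hKdef ▸ h))
  have hKpos : 0 < K := lt_of_le_of_ne (Complex.normSq_nonneg _) (Ne.symm hK)
  -- termwise rewrite
  have hterm : ∀ n : ℤ, ‖(E - 1) / (2*π*Complex.I*(w - n))‖^2
      = K / (4*π^2) * (1 / ((β - n)^2 + α^2)) := by
    intro n
    have hns : Complex.normSq (2*π*Complex.I*(w - n)) = 4*π^2*((β - n)^2 + α^2) := by
      simp [hwdef, Complex.normSq_apply, Complex.mul_re, Complex.mul_im]
      ring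
    have hpos : ((β:ℝ) - n)^2 + α^2 ≠ 0 := by positivity
    rw [norm_div, div_pow,
      Complex.sq_norm, Complex.sq_norm, hns]
    field_simp
    exact hKdef.symm
  simp_rw [hterm] at hpe
  rw [tsum_mul_left] at hpe
  have hrefl : ∑' n : ℤ, (1:ℝ) / ((β - n)^2 + α^2) = ∑' n : ℤ, 1 / ((β + n)^2 + α^2) := by
    rw [← (Equiv.neg ℤ).tsum_eq (fun n : ℤ => (1:ℝ)/((β - n)^2 + α^2))]
    apply tsum_congr
    intro n
    have : ((Equiv.neg ℤ n : ℤ) : ℝ) = -(n:ℝ) := by simp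
    simp only [this]
    ring_nf
  rw [hrefl] at hpe
  -- solve for the sum
  have hK4 : K / (4*π^2) ≠ 0 := by positivity
  have hS : ∑' n : ℤ, (1:ℝ) / ((β + n)^2 + α^2)
      = (Real.exp (-(4*π*α)) - 1) / (-(4*π*α)) / (K / (4*π^2)) :=
    (eq_div_iff hK4).mpr (by rw [mul_comm]; exact hpe)
  rw [hS]
  have hu : Real.exp (2*π*α) ≠ 0 := Real.exp_ne_zero _
  set u : ℝ := Real.exp (2*π*α) with hudef
  set v : ℝ := u⁻¹ with hvdef
  have huv : u * v = 1 := mul_inv_cancel₀ hu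
  have hden : 0 < Real.cosh (2*π*α) - Real.cos (2*π*β) := by
    have h1 : 1 < Real.cosh (2*π*α) := Real.one_lt_cosh.mpr (by positivity)
    have h2 := Real.cos_le_one (2*π*β)
    linarith
  have hden' : (u + v)/2 - Real.cos (2*π*β) ≠ 0 := by
    rw [hvdef, hudef, ← Real.exp_neg, ← Real.cosh_eq]
    exact ne_of_gt hden
  have hI4 : Real.exp (-(4*π*α)) = v * v := by
    rw [hvdef, hudef, ← Real.exp_neg, ← Real.exp_add]
    ring_nf
  have hKval' : K = v * v - 2 * v * Real.cos (2*π*β) + 1 := by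
    rw [hKval, hvdef, hudef, Real.exp_neg]
  have hKne' : v * v - 2 * v * Real.cos (2*π*β) + 1 ≠ 0 := hKval' ▸ hK
  have hsinh : Real.sinh (2*π*α) = (u - v)/2 := by
    rw [hvdef, hudef, Real.sinh_eq, Real.exp_neg]
  have hαne : α ≠ 0 := ne_of_gt hα
  have hπne : π ≠ 0 := ne_of_gt hπ
  have hcosh : Real.cosh (2*π*α) = (u + v)/2 := by
    rw [hvdef, hudef, Real.cosh_eq, Real.exp_neg]
  rw [hKval', hI4, hsinh, hcosh]
  have hB1 : (-(4*π*α)) * (v * v - 2 * v * Real.cos (2*π*β) + 1) ≠ 0 := by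
    apply mul_ne_zero _ hKne'
    intro h
    nlinarith
  have hD1 : α * ((u + v)/2 - Real.cos (2*π*β)) ≠ 0 := mul_ne_zero hαne hden'
  rw [div_div_eq_mul_div, div_mul_eq_mul_div, div_div, div_eq_div_iff hB1 hD1]
  linear_combination (2*π^2*α*(2*v - 2*Real.cos (2*π*β))) * huv

lemma tsum_core' (α β : ℝ) (hα : α ≠ 0) :
    ∑' k : ℤ, 1 / ((β + k)^2 + α^2)
      = π * Real.sinh (2*π*α) / (α * (Real.cosh (2*π*α) - Real.cos (2*π*β))) := by
  rcases hα.lt_or_gt with h | h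
  · have h0 := tsum_core (-α) β (by linarith)
    simp only [neg_sq, show 2*π*(-α) = -(2*π*α) by ring, Real.sinh_neg, Real.cosh_neg] at h0
    rw [h0]
    rw [mul_neg, neg_div, neg_mul, div_neg, neg_neg]
  · exact tsum_core α β h

end

/-- **Completeness trace identity for perturbed Jacobi matrices.**
For `l > 0` and `t ∈ ℂ` with `Im t ≠ 0`, `t ≠ ±il`, set
`x = ln|(t+il)/(t-il)|` and `y = arg((t+il)/(t-il))`.  The eigenvalues
`z_k = 2l(y + 2πk + ix)/((y + 2πk)² + x²)` satisfy `Σ_{k ∈ ℤ} Im z_k = Im t`. -/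
theorem sum_im_eigenvalues_eq_im_t (l : ℝ) (hl : 0 < l) (t : ℂ)
    (ht : t.im ≠ 0) (ht₁ : t ≠ Complex.I * l) (ht₂ : t ≠ -(Complex.I * l)) :
    ∑' k : ℤ,
        2 * l * Real.log (‖(t + Complex.I * l) / (t - Complex.I * l)‖) /
          ((Complex.arg ((t + Complex.I * l) / (t - Complex.I * l))
              + 2 * Real.pi * (k : ℝ)) ^ 2 +
            Real.log (‖(t + Complex.I * l) / (t - Complex.I * l)‖) ^ 2)
      = t.im := by
  have hπ := Real.pi_pos
  have hlne : l ≠ 0 := ne_of_gt hl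
  set w : ℂ := (t + Complex.I * l) / (t - Complex.I * l) with hw
  have hd : t - Complex.I * l ≠ 0 := sub_ne_zero.mpr ht₁
  have hnum : t + Complex.I * l ≠ 0 := by
    intro h
    exact ht₂ (by linear_combination h)
  have hwne : w ≠ 0 := div_ne_zero hnum hd
  have hnsd : Complex.normSq (t - Complex.I * l) ≠ 0 := by
    simpa using hd
  set X : ℝ := ‖w‖ with hX
  have hX0 : 0 < X := norm_pos_iff.mpr hwne
  have hsub : Complex.normSq (t + Complex.I * l) - Complex.normSq (t - Complex.I * l)
      = 4 * l * t.im := by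
    simp [Complex.normSq_apply, Complex.mul_re, Complex.mul_im]
    ring
  have hX2 : X^2 = Complex.normSq w := Complex.sq_norm w
  have hw4 : Complex.normSq w
      = Complex.normSq (t + Complex.I * l) / Complex.normSq (t - Complex.I * l) := by
    rw [hw, Complex.normSq_div]
  have hX1 : X ≠ 1 := by
    intro h
    have h1 : Complex.normSq w = 1 := by rw [← hX2, h]; norm_num
    rw [hw4, div_eq_one_iff_eq hnsd] at h1
    rw [h1] at hsub
    simp at hsub
    rcases hsub with h' | h' <;> [exact hlne h'; exact ht h']
  set x : ℝ := Real.log X with hxdef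
  set y : ℝ := Complex.arg w with hy
  have hx : x ≠ 0 := by
    intro h
    rcases Real.log_eq_zero.mp (hxdef ▸ h) with h' | h' | h'
    · exact hX0.ne' h'
    · exact hX1 h'
    · linarith
  have hstep : ∀ k : ℤ, 2*l*x / ((y + 2*π*(k:ℝ))^2 + x^2)
      = (l*x/(2*π^2)) * (1 / ((y/(2*π) + (k:ℝ))^2 + (x/(2*π))^2)) := by
    intro k
    have h1 : (y + 2*π*(k:ℝ))^2 + x^2 = (4*π^2) * ((y/(2*π) + (k:ℝ))^2 + (x/(2*π))^2) := by
      field_simp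
      ring
    have h2 : ((y/(2*π) + (k:ℝ))^2 + (x/(2*π))^2) ≠ 0 := by positivity
    rw [h1]
    field_simp
    ring
  rw [tsum_congr hstep, tsum_mul_left,
    tsum_core' (x/(2*π)) (y/(2*π)) (div_ne_zero hx (by positivity))]
  rw [show 2*π*(x/(2*π)) = x by field_simp, show 2*π*(y/(2*π)) = y by field_simp]
  have hcos : Real.cos y = w.re / X := Complex.cos_arg hwne
  have hsinh : Real.sinh x = (X - X⁻¹)/2 := by
    rw [hxdef, Real.sinh_eq, Real.exp_log hX0, Real.exp_neg, Real.exp_log hX0]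
  have hcosh : Real.cosh x = (X + X⁻¹)/2 := by
    rw [hxdef, Real.cosh_eq, Real.exp_log hX0, Real.exp_neg, Real.exp_log hX0]
  have hdenpos : 0 < Real.cosh x - Real.cos y := by
    have h1 : 1 < Real.cosh x := Real.one_lt_cosh.mpr hx
    have h2 := Real.cos_le_one y
    linarith
  have hxd : x/(2*π) * (Real.cosh x - Real.cos y) ≠ 0 :=
    mul_ne_zero (div_ne_zero hx (by positivity)) (ne_of_gt hdenpos)
  have hval : (l*x/(2*π^2)) * (π * Real.sinh x / ((x/(2*π)) * (Real.cosh x - Real.cos y)))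
      = l * Real.sinh x / (Real.cosh x - Real.cos y) := by
    rw [div_mul_div_comm,
      div_eq_div_iff (mul_ne_zero (by positivity) hxd) (ne_of_gt hdenpos)]
    field_simp
  rw [hval, hsinh, hcosh, hcos]
  -- reduce to normSq form
  have hw1 : Complex.normSq (w - 1) = Complex.normSq w - 2*w.re + 1 := by
    simp [Complex.normSq_apply]
    ring
  have hw2 : w - 1 = (2*Complex.I*l)/(t - Complex.I*l) := by
    rw [hw, div_sub_one hd]
    congr 1
    ring
  have hw3 : Complex.normSq (w - 1) = 4*l^2 / Complex.normSq (t - Complex.I*l) := by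
    rw [hw2, Complex.normSq_div]
    congr 1
    simp [Complex.normSq_apply, Complex.mul_re, Complex.mul_im]
    ring
  have hwre : Complex.normSq w - 2*w.re + 1 ≠ 0 := by
    rw [← hw1, hw3]
    positivity
  have e2 : (X + X⁻¹)/2 - w.re/X = (Complex.normSq w - 2*w.re + 1)/(2*X) := by
    rw [← hX2]
    field_simp
    ring
  have e1 : (X - X⁻¹)/2 = (Complex.normSq w - 1)/(2*X) := by
    rw [← hX2]
    field_simp
  have hns1 : Complex.normSq w - 1 = 4*l*t.im / Complex.normSq (t - Complex.I*l) := by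
    rw [hw4, div_sub_one hnsd, hsub]
  have hns2 : Complex.normSq w - 2*w.re + 1 = 4*l^2 / Complex.normSq (t - Complex.I*l) := by
    rw [← hw1, hw3]
  rw [e1, e2, hns1, hns2]
  field_simp
end
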